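/- arXiv:1302.5568 — 5 statements merged into one kernel-verified Lean document; each statement's English description precedes it below -/
import Mathlib

section
/- Let u : ℝ^N → ℝ be locally bounded and upper semicontinuous, and suppose u satisfies Du·γ ≤ g in (closure Ω)^c in the viscosity sense. Then for every y ∉ closure(Ω) and every t with 0 < t ≤ τ_y, one has u(y) ≤ ∫₀ᵗ g(X_y(s)) ds + u(X_y(t)). -/
/-!
Formally `s ↦ u (X s) + ∫₀ˢ g (X r) dr` is nondecreasing along the trajectory, its derivative
being `-Du·γ + g ≥ 0`. Since `u` is merely upper semicontinuous we double the variables: for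
`η, ε > 0` maximise `u z + ∫₀ˢ g (X r) dr + η s - ‖z - X s‖² / ε²` over `[0, t] × K`, where `K` is
a compact neighbourhood of the trajectory inside the open set. Comparing the maximisers for `ε`
and `2 ε` shows that the penalty `‖z - X s‖² / ε²` at the maximiser `(s, z)` tends to `0`. If
`s < t`, the viscosity inequality in `z` and the one-sided derivative in `s` combine, through the
Lipschitz bounds on `γ` and `g`, into `η ≤ Lg ‖z - X s‖ + 2 Lγ ‖z - X s‖² / ε²`, impossible for
small `ε`; so `s = t`, and upper semicontinuity of `u` at `X t` gives the claim up to `2 η t`.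
The endpoint `t = τ y`, where the trajectory may touch `closure Ω`, is reached from below by
upper semicontinuity again.
-/

open MeasureTheory Filter Set Metric
open scoped Topology RealInnerProductSpace

noncomputable section

/-- `ℝ^N` as a Euclidean space. -/
abbrev EN (N : ℕ) := EuclideanSpace ℝ (Fin N)

theorem UpperSemicontinuousWithinAt.le_of_frequently_le {α β : Type*} [TopologicalSpace α]
    [LinearOrder β] {f : α → β} {s : Set α} {x : α} {a : β} (hf : UpperSemicontinuousWithinAt f s x)
    (h : ∃ᶠ y in 𝓝[s] x, a ≤ f y) : a ≤ f x := by
  by_contra! hlt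
  obtain ⟨y, hay, hya⟩ := (h.and_eventually (hf a hlt)).exists
  exact (hay.trans_lt hya).false

theorem IsLocalMaxOn.hasDerivWithinAt_Ici_nonpos {f : ℝ → ℝ} {a f' : ℝ}
    (h : IsLocalMaxOn f (Ici a) a) (hf : HasDerivWithinAt f f' (Ici a) a) : f' ≤ 0 := by
  have hcone : (1 : ℝ) ∈ posTangentConeAt (Ici a) a :=
    mem_posTangentConeAt_of_segment_subset <| by
      rw [segment_eq_Icc (by linarith)]
      exact Icc_subset_Ici_self
  simpa using h.hasFDerivWithinAt_nonpos hf hcone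

namespace intervalIntegral

variable {f : ℝ → ℝ} {a b : ℝ}

theorem continuousOn_integral_of_continuousOn (hab : a ≤ b) (hf : ContinuousOn f (Icc a b)) :
    ContinuousOn (fun x => ∫ r in a..x, f r) (Icc a b) := by
  simpa only [uIcc_of_le hab] using
    continuousOn_primitive_interval' (hf.intervalIntegrable_of_Icc hab) left_mem_uIcc

theorem hasDerivWithinAt_Ici_integral_of_continuousOn (hf : ContinuousOn f (Icc a b)) {s : ℝ}
    (hs : s ∈ Ico a b) : HasDerivWithinAt (fun x => ∫ r in a..x, f r) (f s) (Ici s) s := by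
  have hIcc : Icc a b ∈ 𝓝[>] s :=
    mem_of_superset (Ioo_mem_nhdsGT hs.2) (Ioo_subset_Icc_self.trans (Icc_subset_Icc_left hs.1))
  exact integral_hasDerivWithinAt_right (t := Ioi s)
    ((hf.mono (Icc_subset_Icc_right hs.2.le)).intervalIntegrable_of_Icc hs.1)
    ⟨Icc a b, hIcc, hf.aestronglyMeasurable measurableSet_Icc⟩
    ((hf s (Ico_subset_Icc_self hs)).mono_of_mem_nhdsWithin hIcc)

end intervalIntegral

theorem tendsto_nhdsGT_zero_of_div_sq {f : ℝ → ℝ}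
    (h : Tendsto (fun ε => f ε / ε ^ 2) (𝓝[>] 0) (𝓝 0)) : Tendsto f (𝓝[>] 0) (𝓝 0) := by
  have hsq : Tendsto (fun ε : ℝ => ε ^ 2) (𝓝[>] 0) (𝓝 0) :=
    ((continuous_pow 2).tendsto' 0 0 (by norm_num)).mono_left nhdsWithin_le_nhds
  refine (zero_mul (0 : ℝ) ▸ h.mul hsq).congr' (eventually_nhdsWithin_of_forall fun ε hε => ?_)
  field_simp [(mem_Ioi.1 hε).ne']

theorem tendsto_penalty_div_sq_of_isMaxOn {α : Type*} {A : Set α} {F P : α → ℝ} {p : ℝ → α}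
    {a₀ : α} (ha₀ : a₀ ∈ A) (hPa₀ : P a₀ = 0) (hP : ∀ a ∈ A, 0 ≤ P a)
    (hpA : ∀ ε, p ε ∈ A) (hp : ∀ ε, IsMaxOn (fun a => F a - P a / ε ^ 2) A (p ε)) :
    Tendsto (fun ε => P (p ε) / ε ^ 2) (𝓝[>] 0) (𝓝 0) := by
  set M : ℝ → ℝ := fun ε => F (p ε) - P (p ε) / ε ^ 2
  have hM : ∀ ε, ∀ a ∈ A, F a - P a / ε ^ 2 ≤ M ε := fun ε a ha => hp ε ha
  have hmono : MonotoneOn M (Ioi 0) := fun ε hε ε' _ hεε' => by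
    have : P (p ε) / ε' ^ 2 ≤ P (p ε) / ε ^ 2 :=
      div_le_div_of_nonneg_left (hP _ (hpA ε)) (pow_pos hε 2) (pow_le_pow_left₀ hε.out.le hεε' 2)
    linarith [hM ε' (p ε) (hpA ε)]
  have hbdd : BddBelow (M '' Ioi 0) :=
    ⟨F a₀, by rintro _ ⟨ε, -, rfl⟩; simpa [hPa₀] using hM ε a₀ ha₀⟩
  have hlim := hmono.tendsto_nhdsGT hbdd
  have hlim₂ : Tendsto (fun ε => M (2 * ε)) (𝓝[>] 0) (𝓝 (sInf (M '' Ioi 0))) :=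
    hlim.comp <| tendsto_nhdsWithin_of_tendsto_nhds_of_eventually_within _
      (by simpa using ((continuous_const_mul (2 : ℝ)).tendsto 0).mono_left nhdsWithin_le_nhds)
      (eventually_nhdsWithin_of_forall fun ε (hε : 0 < ε) => mul_pos two_pos hε)
  have hdouble : ∀ ε > 0, P (p ε) / ε ^ 2 ≤ 4 / 3 * (M (2 * ε) - M ε) := fun ε hε => by
    have h := hM (2 * ε) (p ε) (hpA ε)
    have h4 : P (p ε) / (2 * ε) ^ 2 = P (p ε) / ε ^ 2 / 4 := by
      field_simp
      ring
    simp only [M] at h ⊢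
    rw [h4] at h
    linarith
  refine squeeze_zero' (eventually_nhdsWithin_of_forall fun ε _ => ?_)
    (eventually_nhdsWithin_of_forall hdouble) ?_
  · exact div_nonneg (hP _ (hpA ε)) (sq_nonneg ε)
  · simpa using (hlim₂.sub hlim).const_mul (4 / 3)

theorem inner_gradient_norm_sub_sq_div {E : Type*} [NormedAddCommGroup E] [InnerProductSpace ℝ E]
    [CompleteSpace E] (a : E) (c : ℝ) (x v : E) :
    ⟪gradient (fun w => ‖w - a‖ ^ 2 / c) x, v⟫ = 2 / c * ⟪x - a, v⟫ := by
  have hφ := ((hasFDerivAt_id x).sub_const a).norm_sq.mul_const c⁻¹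
  simp only [← div_eq_mul_inv, id] at hφ
  rw [inner_gradient_left, hφ.fderiv]
  simp only [ContinuousLinearMap.comp_id, smul_apply, coe_innerSL_apply,
    nsmul_eq_mul, Nat.cast_ofNat, smul_eq_mul]
  ring

theorem upperSemicontinuousOn_penalized {E : Type*} [NormedAddCommGroup E] {u : E → ℝ}
    (hu : UpperSemicontinuous u) {X : ℝ → E} {G : ℝ → ℝ} {I : Set ℝ} (hX : ContinuousOn X I)
    (hG : ContinuousOn G I) (η ε : ℝ) (K : Set E) :
    UpperSemicontinuousOn
      (fun q : ℝ × E => u q.2 + (G q.1 + η * q.1) - ‖q.2 - X q.1‖ ^ 2 / ε ^ 2) (I ×ˢ K) := by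
  simp only [add_sub_assoc (u _)]
  refine ((hu.comp continuous_snd).upperSemicontinuousOn _).add
    (ContinuousOn.upperSemicontinuousOn ?_)
  have hfst : MapsTo Prod.fst (I ×ˢ K) I := fun q hq => hq.1
  have hG₁ := hG.comp continuousOn_fst hfst
  have hX₁ := hX.comp continuousOn_fst hfst
  fun_prop

theorem exists_penalized_maximizers {E : Type*} [NormedAddCommGroup E] {u : E → ℝ}
    (hu : UpperSemicontinuous u) {X : ℝ → E} {G : ℝ → ℝ} {t : ℝ} (ht : 0 ≤ t)
    (hX : ContinuousOn X (Icc 0 t)) (hG : ContinuousOn G (Icc 0 t)) (η : ℝ)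
    {K : Set E} (hK : IsCompact K) (hX₀ : X 0 ∈ K) :
    ∃ p : ℝ → ℝ × E, (∀ ε, p ε ∈ Icc 0 t ×ˢ K) ∧
      (∀ ε, IsMaxOn (fun q => u q.2 + (G q.1 + η * q.1) - ‖q.2 - X q.1‖ ^ 2 / ε ^ 2)
        (Icc 0 t ×ˢ K) (p ε)) ∧
      Tendsto (fun ε => ‖(p ε).2 - X (p ε).1‖ ^ 2 / ε ^ 2) (𝓝[>] 0) (𝓝 0) ∧
      Tendsto (fun ε => dist (p ε).2 (X (p ε).1)) (𝓝[>] 0) (𝓝 0) := by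
  have h₀ : ((0 : ℝ), X 0) ∈ Icc 0 t ×ˢ K := ⟨left_mem_Icc.2 ht, hX₀⟩
  choose p hpA hp using fun ε : ℝ => (upperSemicontinuousOn_penalized hu hX hG η ε K).exists_isMaxOn
    ⟨_, h₀⟩ (isCompact_Icc.prod hK)
  have hm := tendsto_penalty_div_sq_of_isMaxOn h₀ (by simp) (fun q _ => by positivity) hpA hp
  refine ⟨p, hpA, hp, hm, ?_⟩
  simpa [Function.comp_def, dist_eq_norm] using
    (Real.continuous_sqrt.tendsto 0).comp (tendsto_nhdsGT_zero_of_div_sq hm)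

variable {E : Type*} [NormedAddCommGroup E] [InnerProductSpace ℝ E]

/-- `u` is a viscosity subsolution of `Du · γ ≤ g` in `U`. -/
def IsTransportSubsolutionOn [CompleteSpace E] (u : E → ℝ) (γ : E → E) (g : E → ℝ) (U : Set E) :
    Prop :=
  ∀ φ : E → ℝ, ContDiff ℝ 2 φ → ∀ x ∈ U, IsLocalMax (fun z => u z - φ z) x →
    ⟪gradient φ x, γ x⟫ ≤ g x

namespace IsTransportSubsolutionOn

variable [CompleteSpace E] {u : E → ℝ} {γ : E → E} {g : E → ℝ} {U : Set E} {Lγ Lg : NNReal}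

theorem le_penalty_of_isLocalMax (hsub : IsTransportSubsolutionOn u γ g U)
    (hγ : LipschitzWith Lγ γ) (hg : LipschitzWith Lg g)
    {X : ℝ → E} {G : ℝ → ℝ} {s η ε : ℝ} {z : E} (hz : z ∈ U)
    (hX : HasDerivWithinAt X (-γ (X s)) (Ici s) s) (hG : HasDerivWithinAt G (g (X s)) (Ici s) s)
    (hspace : IsLocalMax (fun w => u w - ‖w - X s‖ ^ 2 / ε ^ 2) z)
    (htime : IsLocalMaxOn (fun r => G r + η * r - ‖z - X r‖ ^ 2 / ε ^ 2) (Ici s) s) :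
    η ≤ Lg * ‖z - X s‖ + 2 * Lγ * (‖z - X s‖ ^ 2 / ε ^ 2) := by
  set x := X s
  have hspace' : 2 / ε ^ 2 * ⟪z - x, γ z⟫ ≤ g z := by
    have hφ : ContDiff ℝ 2 fun w : E => ‖w - x‖ ^ 2 / ε ^ 2 :=
      ((contDiff_norm_sq ℝ).comp (contDiff_id.sub contDiff_const)).div_const _
    simpa only [inner_gradient_norm_sub_sq_div] using hsub _ hφ z hz hspace
  have htime' : g x + η - 2 / ε ^ 2 * ⟪z - x, γ x⟫ ≤ 0 := by
    have hdist : HasDerivWithinAt (fun r => ‖z - X r‖ ^ 2) (2 * ⟪z - x, γ x⟫) (Ici s) s := by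
      simpa using (hX.const_sub z).norm_sq
    have hψ := (hG.add ((hasDerivWithinAt_id s _).const_mul η)).sub (hdist.div_const (ε ^ 2))
    rw [mul_one] at hψ
    rw [div_mul_eq_mul_div]
    exact htime.hasDerivWithinAt_Ici_nonpos hψ
  have hγ' : ⟪z - x, γ x - γ z⟫ ≤ ‖z - x‖ * (Lγ * ‖z - x‖) := by
    refine (real_inner_le_norm _ _).trans (mul_le_mul_of_nonneg_left ?_ (norm_nonneg _))
    simpa only [norm_sub_rev x z] using hγ.norm_sub_le x z
  have hg' : g z - g x ≤ Lg * ‖z - x‖ := (le_abs_self _).trans (hg.norm_sub_le z x)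
  have hε : 0 ≤ 2 / ε ^ 2 := by positivity
  calc η ≤ g z - g x + 2 / ε ^ 2 * ⟪z - x, γ x - γ z⟫ := by
        rw [inner_sub_right]
        linarith
    _ ≤ Lg * ‖z - x‖ + 2 / ε ^ 2 * (‖z - x‖ * (Lγ * ‖z - x‖)) := by gcongr
    _ = Lg * ‖z - x‖ + 2 * Lγ * (‖z - x‖ ^ 2 / ε ^ 2) := by ring

theorem le_penalty_of_isMaxOn (hsub : IsTransportSubsolutionOn u γ g U)
    (hγ : LipschitzWith Lγ γ) (hg : LipschitzWith Lg g)
    {X : ℝ → E} {G : ℝ → ℝ} {K : Set E} {t η ε s : ℝ} {z : E} (hs : s ∈ Ico 0 t) (hz : z ∈ U)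
    (hK : K ∈ 𝓝 z) (hX : HasDerivWithinAt X (-γ (X s)) (Ici s) s)
    (hG : HasDerivWithinAt G (g (X s)) (Ici s) s)
    (hmax : IsMaxOn (fun q : ℝ × E => u q.2 + (G q.1 + η * q.1) - ‖q.2 - X q.1‖ ^ 2 / ε ^ 2)
      (Icc 0 t ×ˢ K) (s, z)) :
    η ≤ Lg * ‖z - X s‖ + 2 * Lγ * (‖z - X s‖ ^ 2 / ε ^ 2) := by
  refine hsub.le_penalty_of_isLocalMax hγ hg hz hX hG ?_ ?_
  · filter_upwards [hK] with w hw
    have h := isMaxOn_iff.1 hmax (s, w) ⟨Ico_subset_Icc_self hs, hw⟩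
    linarith
  · filter_upwards [mem_of_superset (Icc_mem_nhdsGE hs.2) (Icc_subset_Icc_left hs.1)] with r hr
    have h := isMaxOn_iff.1 hmax (r, z) ⟨hr, mem_of_mem_nhds hK⟩
    linarith

theorem lt_integral_add_add_of_mapsTo_Icc [ProperSpace E] (hsub : IsTransportSubsolutionOn u γ g U)
    (hU : IsOpen U) (hγ : LipschitzWith Lγ γ) (hg : LipschitzWith Lg g)
    (hu : UpperSemicontinuous u) {X : ℝ → E} {t η : ℝ} (ht : 0 < t) (hη : 0 < η)
    (hX : ∀ s ∈ Icc 0 t, HasDerivWithinAt X (-γ (X s)) (Icc 0 t) s) (hXU : MapsTo X (Icc 0 t) U) :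
    u (X 0) < (∫ s in 0..t, g (X s)) + u (X t) + 2 * η * t := by
  have hXc : ContinuousOn X (Icc 0 t) := fun s hs => (hX s hs).continuousWithinAt
  have hgX : ContinuousOn (fun s => g (X s)) (Icc 0 t) := hg.continuous.comp_continuousOn hXc
  have htraj : IsCompact (X '' Icc 0 t) := isCompact_Icc.image_of_continuousOn hXc
  obtain ⟨r, hr, hrU⟩ := htraj.exists_thickening_subset_open hU hXU.image_subset
  set K := cthickening 1 (X '' Icc 0 t)
  have hX₀ : X 0 ∈ K := self_subset_cthickening _ (mem_image_of_mem X (left_mem_Icc.2 ht.le))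
  obtain ⟨p, hpA, hp, hm, hd⟩ := exists_penalized_maximizers hu ht.le hXc
    (intervalIntegral.continuousOn_integral_of_continuousOn ht.le hgX) η htraj.cthickening hX₀
  obtain ⟨ρ, hρ, husc⟩ : ∃ ρ > 0, ∀ z, dist z (X t) < ρ → u z < u (X t) + η * t :=
    Metric.eventually_nhds_iff.1 (hu (X t) _ (by linarith [mul_pos hη ht]))
  by_contra! hcon
  have hest : ∀ᶠ ε in 𝓝[>] 0, η ≤ Lg * dist (p ε).2 (X (p ε).1) +
      2 * Lγ * (‖(p ε).2 - X (p ε).1‖ ^ 2 / ε ^ 2) := by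
    filter_upwards [hd.eventually (gt_mem_nhds hr), hd.eventually (gt_mem_nhds one_pos),
      hd.eventually (gt_mem_nhds hρ)] with ε hεr hε1 hερ
    obtain ⟨⟨hs0, hst⟩, -⟩ := hpA ε
    have hXs : X (p ε).1 ∈ X '' Icc 0 t := mem_image_of_mem X ⟨hs0, hst⟩
    -- At `s = t` the maximal value would be below `u (X 0)`, its value at `(0, X 0)`.
    have hslt : (p ε).1 < t := by
      refine hst.lt_of_ne fun hs => ?_
      have h0 := isMaxOn_iff.1 (hp ε) (0, X 0) ⟨left_mem_Icc.2 ht.le, hX₀⟩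
      have hu' := husc (p ε).2 (hs ▸ hερ)
      have hpen : 0 ≤ ‖(p ε).2 - X (p ε).1‖ ^ 2 / ε ^ 2 := by positivity
      simp only [hs] at h0 hpen
      norm_num at h0
      linarith
    rw [dist_eq_norm]
    exact hsub.le_penalty_of_isMaxOn hγ hg ⟨hs0, hslt⟩ (hrU (mem_thickening_iff.2 ⟨_, hXs, hεr⟩))
      (mem_of_superset (isOpen_thickening.mem_nhds (mem_thickening_iff.2 ⟨_, hXs, hε1⟩))
        (thickening_subset_cthickening _ _))
      ((hX _ ⟨hs0, hst⟩).mono_of_mem_nhdsWithin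
        (mem_of_superset (Icc_mem_nhdsGE hslt) (Icc_subset_Icc_left hs0)))
      (intervalIntegral.hasDerivWithinAt_Ici_integral_of_continuousOn hgX ⟨hs0, hslt⟩) (hp ε)
  have hη₀ : η ≤ 0 := ge_of_tendsto
    (by simpa using (hd.const_mul (Lg : ℝ)).add (hm.const_mul (2 * Lγ : ℝ))) hest
  linarith

theorem le_integral_add_of_mapsTo_Icc [ProperSpace E] (hsub : IsTransportSubsolutionOn u γ g U)
    (hU : IsOpen U) (hγ : LipschitzWith Lγ γ) (hg : LipschitzWith Lg g)
    (hu : UpperSemicontinuous u) {X : ℝ → E} {t : ℝ} (ht : 0 < t)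
    (hX : ∀ s ∈ Icc 0 t, HasDerivWithinAt X (-γ (X s)) (Icc 0 t) s) (hXU : MapsTo X (Icc 0 t) U) :
    u (X 0) ≤ (∫ s in 0..t, g (X s)) + u (X t) := by
  refine le_of_forall_pos_lt_add fun δ hδ => ?_
  have h := hsub.lt_integral_add_add_of_mapsTo_Icc hU hγ hg hu ht (by positivity : 0 < δ / (2 * t))
    hX hXU
  rwa [show 2 * (δ / (2 * t)) * t = δ by field_simp] at h

theorem le_integral_add_of_mapsTo_Ico [ProperSpace E] (hsub : IsTransportSubsolutionOn u γ g U)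
    (hU : IsOpen U) (hγ : LipschitzWith Lγ γ) (hg : LipschitzWith Lg g)
    (hu : UpperSemicontinuous u) {X : ℝ → E} {t : ℝ} (ht : 0 < t)
    (hX : ∀ s ∈ Icc 0 t, HasDerivWithinAt X (-γ (X s)) (Icc 0 t) s) (hXU : MapsTo X (Ico 0 t) U) :
    u (X 0) ≤ (∫ s in 0..t, g (X s)) + u (X t) := by
  have hXc : ContinuousOn X (Icc 0 t) := fun s hs => (hX s hs).continuousWithinAt
  have hbefore : ∀ t' ∈ Ioo 0 t, u (X 0) ≤ (∫ s in 0..t', g (X s)) + u (X t') := fun t' ht' =>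
    hsub.le_integral_add_of_mapsTo_Icc hU hγ hg hu ht'.1
      (fun s hs => (hX s ⟨hs.1, hs.2.trans ht'.2.le⟩).mono (Icc_subset_Icc_right ht'.2.le))
      (fun s hs => hXU ⟨hs.1, hs.2.trans_lt ht'.2⟩)
  have husc : UpperSemicontinuousWithinAt (fun s => (∫ r in 0..s, g (X r)) + u (X s))
      (Icc 0 t) t :=
    ((intervalIntegral.continuousOn_integral_of_continuousOn ht.le
      (hg.continuous.comp_continuousOn hXc)).upperSemicontinuousOn.add
      ((hu.upperSemicontinuousOn univ).comp hXc (mapsTo_univ _ _))) t (right_mem_Icc.2 ht.le)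
  have hev : ∀ᶠ t' in 𝓝[<] t, u (X 0) ≤ (∫ s in 0..t', g (X s)) + u (X t') :=
    mem_of_superset (Ioo_mem_nhdsLT ht) hbefore
  exact husc.le_of_frequently_le <| hev.frequently.filter_mono <|
    (nhdsWithin_Ioo_eq_nhdsLT ht).symm.trans_le (nhdsWithin_mono _ Ioo_subset_Icc_self)

end IsTransportSubsolutionOn

theorem transport_subsolution_general
    {N : ℕ}
    (Ω : Set (EN N))
    (γ : EN N → EN N) (g : EN N → ℝ)
    (Lγ Lg : NNReal) (hγlip : LipschitzWith Lγ γ) (hglip : LipschitzWith Lg g)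
    -- the flow of `-γ`
    (X : EN N → ℝ → EN N)
    (hX0 : ∀ y, X y 0 = y)
    (hXode : ∀ y t, 0 ≤ t → HasDerivAt (X y) (-(γ (X y t))) t)
    -- the hitting time of `closure Ω`
    (τ : EN N → ℝ)
    (hτ : ∀ y, τ y = sInf {t : ℝ | 0 < t ∧ X y t ∈ closure Ω})
    -- `u` : locally bounded, usc, viscosity subsolution of `Du·γ ≤ g` in `(closure Ω)ᶜ`
    (u : EN N → ℝ)
    (hu_usc : UpperSemicontinuous u)
    (hu_visc : ∀ φ : EN N → ℝ, ContDiff ℝ 2 φ →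
      ∀ x ∉ closure Ω, IsLocalMax (fun z => u z - φ z) x →
        ⟪gradient φ x, γ x⟫ ≤ g x)
    (y : EN N) (hy : y ∉ closure Ω)
    (t : ℝ) (ht0 : 0 < t) (ht : t ≤ τ y) :
    u y ≤ (∫ s in (0:ℝ)..t, g (X y s)) + u (X y t) := by
  have hXU : MapsTo (X y) (Ico 0 t) (closure Ω)ᶜ := by
    rintro s ⟨hs0, hst⟩
    rcases hs0.eq_or_lt with rfl | hs0
    · rwa [hX0]
    · intro hs
      have hτs : τ y ≤ s := hτ y ▸ csInf_le ⟨0, fun _ hr => hr.1.le⟩ ⟨hs0, hs⟩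
      linarith
  have hsub : IsTransportSubsolutionOn u γ g (closure Ω)ᶜ := hu_visc
  simpa only [hX0] using hsub.le_integral_add_of_mapsTo_Ico isClosed_closure.isOpen_compl hγlip
    hglip hu_usc ht0 (fun s hs => (hXode y s hs.1).hasDerivWithinAt) hXU

/-- Lemma 2.1 (a).  Let `Ω ⊆ ℝ^N` be open, `γ, g` bounded Lipschitz,
`X y` the unique solution of `Ẋ = -γ(X)`, `X y 0 = y`, and
`τ y = inf {t > 0 : X y t ∈ closure Ω}`, assumed finite for `y ∉ closure Ω` (BC2).
If `u` is locally bounded, upper semicontinuous and satisfies `Du·γ ≤ g` in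
`(closure Ω)ᶜ` in the viscosity sense, then for every `y ∉ closure Ω` and every
`0 < t ≤ τ y` one has `u y ≤ ∫₀ᵗ g(X y s) ds + u (X y t)`. -/
theorem transport_subsolution
    {N : ℕ} (hN : 1 ≤ N)
    (Ω : Set (EN N)) (hΩ : IsOpen Ω)
    (γ : EN N → EN N) (g : EN N → ℝ)
    (Lγ Lg : NNReal) (hγlip : LipschitzWith Lγ γ) (hglip : LipschitzWith Lg g)
    (Cγ Cg : ℝ) (hγbd : ∀ x, ‖γ x‖ ≤ Cγ) (hgbd : ∀ x, |g x| ≤ Cg)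
    -- the flow of `-γ`
    (X : EN N → ℝ → EN N)
    (hX0 : ∀ y, X y 0 = y)
    (hXode : ∀ y t, 0 ≤ t → HasDerivAt (X y) (-(γ (X y t))) t)
    -- the hitting time of `closure Ω`
    (τ : EN N → ℝ)
    (hτ : ∀ y, τ y = sInf {t : ℝ | 0 < t ∧ X y t ∈ closure Ω})
    -- (BC2): the trajectory reaches `closure Ω` in finite time
    (hBC2 : ∀ y ∉ closure Ω, {t : ℝ | 0 < t ∧ X y t ∈ closure Ω}.Nonempty)
    -- `u` : locally bounded, usc, viscosity subsolution of `Du·γ ≤ g` in `(closure Ω)ᶜ`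
    (u : EN N → ℝ)
    (hu_locbdd : ∀ x : EN N, ∃ C : ℝ, ∀ᶠ y in 𝓝 x, |u y| ≤ C)
    (hu_usc : UpperSemicontinuous u)
    (hu_visc : ∀ φ : EN N → ℝ, ContDiff ℝ 2 φ →
      ∀ x ∉ closure Ω, IsLocalMax (fun z => u z - φ z) x →
        ⟪gradient φ x, γ x⟫ ≤ g x)
    (y : EN N) (hy : y ∉ closure Ω)
    (t : ℝ) (ht0 : 0 < t) (ht : t ≤ τ y) :
    u y ≤ (∫ s in (0:ℝ)..t, g (X y s)) + u (X y t) :=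
  transport_subsolution_general Ω γ g Lγ Lg hγlip hglip X hX0 hXode τ hτ u hu_usc hu_visc y hy t ht0
    ht
end
end

section
/- Let v : ℝ^N → ℝ be locally bounded and lower semicontinuous, and suppose v satisfies Dv·γ ≥ g in (closure Ω)^c in the viscosity sense. Then for every y ∉ closure(Ω) and every t with 0 < t ≤ τ_y, one has v(y) ≥ ∫₀ᵗ g(X_y(s)) ds + v(X_y(t)). -/
open MeasureTheory Filter Set Metric
open scoped Topology RealInnerProductSpace

noncomputable section

/-!
Double the variables and penalise: minimise
`Φₙ(s, z) = v z + ∫₀ˢ g (X r) dr - ε s + 2ⁿ ‖z - X s‖²` over `[0, t] × K`, where `K` is a compact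
neighbourhood of the trajectory inside `(closure Ω)ᶜ`. Comparing consecutive minima gives
`2ⁿ ‖zₙ - X sₙ‖² → 0`. If `sₙ < t`, the right derivative in time yields
`ε ≤ g (X sₙ) + 2ⁿ⁺¹ ⟪zₙ - X sₙ, γ (X sₙ)⟫`, while the viscosity inequality for the test function
`-2ⁿ ‖· - X sₙ‖²` yields `g zₙ ≤ -2ⁿ⁺¹ ⟪zₙ - X sₙ, γ zₙ⟫`; since `γ` and `g` are Lipschitz these are
incompatible for large `n`. Hence eventually `sₙ = t`, and `Φₙ(t, zₙ) ≤ Φₙ(0, y) = v y` together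
with `zₙ → X t` and lower semicontinuity give the inequality up to `ε t`. This needs the trajectory
to stay in `(closure Ω)ᶜ` on all of `[0, t]`; the endpoint `t = τ y` is reached by lower
semicontinuity in `t`.
-/

open scoped NNReal

theorem IsLocalMinOn.hasDerivWithinAt_Ici_nonneg {f : ℝ → ℝ} {f' a : ℝ}
    (h : IsLocalMinOn f (Ici a) a) (hf : HasDerivWithinAt f f' (Ici a) a) : 0 ≤ f' := by
  have hone : (1 : ℝ) ∈ posTangentConeAt (Ici a) a :=
    mem_posTangentConeAt_of_segment_subset (by
      rw [segment_eq_Icc (by linarith)]; exact Icc_subset_Ici_self)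
  simpa using h.hasFDerivWithinAt_nonneg hf.hasFDerivWithinAt hone

theorem ContinuousOn.integral_hasDerivWithinAt_Ici {f : ℝ → ℝ} {a s : ℝ}
    (hf : ContinuousOn f (Ici a)) (hs : a ≤ s) :
    HasDerivWithinAt (fun u => ∫ r in a..u, f r) (f s) (Ici s) s :=
  intervalIntegral.integral_hasDerivWithinAt_right
    ((hf.mono (by rw [uIcc_of_le hs]; exact Icc_subset_Ici_self)).intervalIntegrable)
    ((hf.mono (Ioi_subset_Ici hs)).stronglyMeasurableAtFilter_nhdsWithin measurableSet_Ioi s)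
    ((hf s hs).mono (Ioi_subset_Ici hs))

theorem ContinuousOn.continuousOn_primitive_Icc {f : ℝ → ℝ} {a b : ℝ}
    (hf : ContinuousOn f (Icc a b)) (hab : a ≤ b) :
    ContinuousOn (fun u => ∫ r in a..u, f r) (Icc a b) := by
  rw [← uIcc_of_le hab] at hf ⊢
  exact intervalIntegral.continuousOn_primitive_interval (hf.integrableOn_compact isCompact_uIcc)

theorem mapsTo_Ico_compl_of_le_sInf {α : Type*} {X : ℝ → α} {S : Set α} {t : ℝ}
    (h0 : X 0 ∉ S) (ht : t ≤ sInf {s | 0 < s ∧ X s ∈ S}) : MapsTo X (Ico 0 t) Sᶜ := by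
  rintro s ⟨hs0, hst⟩ hsS
  rcases hs0.eq_or_lt with rfl | hs0
  · exact h0 hsS
  · exact (ht.trans (csInf_le ⟨0, fun _ hr => hr.1.le⟩ ⟨hs0, hsS⟩)).not_gt hst

theorem tendsto_two_pow_mul_of_isMinOn_add_two_pow_mul {α : Type*} {Q : Set α} {F P : α → ℝ}
    (hP : ∀ a ∈ Q, 0 ≤ P a) {a₀ : α} (ha₀ : a₀ ∈ Q) (hPa₀ : P a₀ = 0) {p : ℕ → α}
    (hpQ : ∀ n, p n ∈ Q) (hp : ∀ n, IsMinOn (fun a => F a + 2 ^ n * P a) Q (p n)) :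
    Tendsto (fun n => 2 ^ n * P (p n)) atTop (𝓝 0) := by
  set m : ℕ → ℝ := fun n => F (p n) + 2 ^ n * P (p n)
  have hstep : ∀ n, m n + 2 ^ n * P (p (n + 1)) ≤ m (n + 1) := fun n => by
    have := hp n (hpQ (n + 1))
    simp only [mem_ofPred_eq, m, pow_succ] at this ⊢
    linarith
  have hmono : Monotone m := monotone_nat_of_le_succ fun n => by
    nlinarith [hstep n, hP _ (hpQ (n + 1)), pow_pos (two_pos (α := ℝ)) n]
  have hbdd : ∀ n, m n ≤ F a₀ := fun n => by simpa [hPa₀] using hp n ha₀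
  have hdiff : Tendsto (fun n => m (n + 1) - m n) atTop (𝓝 0) := by
    have hm := tendsto_atTop_ciSup hmono ⟨F a₀, by rintro _ ⟨n, rfl⟩; exact hbdd n⟩
    simpa using (hm.comp (tendsto_add_atTop_nat 1)).sub hm
  rw [← tendsto_add_atTop_iff_nat 1]
  refine squeeze_zero (fun n => mul_nonneg (by positivity) (hP _ (hpQ _))) (fun n => ?_)
    (by simpa using hdiff.const_mul 2)
  rw [pow_succ]
  linarith [hstep n]

section Penalization

variable {E : Type*} [NormedAddCommGroup E] {g v : E → ℝ} {X : ℝ → E} {t : ℝ}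

def penalizedCost (v g : E → ℝ) (X : ℝ → E) (ε c : ℝ) (p : ℝ × E) : ℝ :=
  v p.2 + (∫ r in (0 : ℝ)..p.1, g (X r)) - ε * p.1 + c * ‖p.2 - X p.1‖ ^ 2

@[simp]
theorem penalizedCost_zero (ε c : ℝ) : penalizedCost v g X ε c (0, X 0) = v (X 0) := by
  simp [penalizedCost]

theorem lowerSemicontinuousOn_penalizedCost (hv : LowerSemicontinuous v) (hg : Continuous g)
    (hX : ContinuousOn X (Icc 0 t)) (ht : 0 ≤ t) (K : Set E) (ε c : ℝ) :
    LowerSemicontinuousOn (penalizedCost v g X ε c) (Icc 0 t ×ˢ K) := by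
  have hI : ContinuousOn (fun u => ∫ r in (0 : ℝ)..u, g (X r)) (Icc 0 t) :=
    (hg.comp_continuousOn hX).continuousOn_primitive_Icc ht
  have hfst : MapsTo Prod.fst (Icc 0 t ×ˢ K) (Icc 0 t) := fun p hp => hp.1
  have hcont : ContinuousOn (fun p : ℝ × E =>
      (∫ r in (0 : ℝ)..p.1, g (X r)) - ε * p.1 + c * ‖p.2 - X p.1‖ ^ 2) (Icc 0 t ×ˢ K) :=
    ((hI.comp continuousOn_fst hfst).sub (continuousOn_const.mul continuousOn_fst)).add
      (continuousOn_const.mul ((continuousOn_snd.sub (hX.comp continuousOn_fst hfst)).norm.pow 2))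
  have hsplit : penalizedCost v g X ε c = fun p =>
      v p.2 + ((∫ r in (0 : ℝ)..p.1, g (X r)) - ε * p.1 + c * ‖p.2 - X p.1‖ ^ 2) := by
    funext p
    simp only [penalizedCost]
    ring
  rw [hsplit]
  exact ((hv.comp continuous_snd).lowerSemicontinuousOn _).add hcont.lowerSemicontinuousOn

end Penalization

section Viscosity

variable {E : Type*} [NormedAddCommGroup E] [InnerProductSpace ℝ E] [CompleteSpace E]

def IsViscositySupersolutionOn (γ : E → E) (g : E → ℝ) (U : Set E) (v : E → ℝ) : Prop :=
  ∀ φ : E → ℝ, ContDiff ℝ 2 φ → ∀ x ∈ U, IsLocalMin (fun z => v z - φ z) x →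
    g x ≤ ⟪gradient φ x, γ x⟫

variable {γ : E → E} {g : E → ℝ} {U : Set E} {v : E → ℝ} {X : ℝ → E} {Lγ Lg : ℝ≥0} {t ε : ℝ}

theorem IsViscositySupersolutionOn.le_of_isLocalMin_add_mul_norm_sq
    (hv : IsViscositySupersolutionOn γ g U v) {x w : E} (hx : x ∈ U) (c : ℝ)
    (hmin : IsLocalMin (fun z => v z + c * ‖z - w‖ ^ 2) x) :
    g x ≤ -(2 * c * ⟪x - w, γ x⟫) := by
  set φ : E → ℝ := fun z => -(c * ‖z - w‖ ^ 2)
  have hφ : ContDiff ℝ 2 φ := (contDiff_const.mul ((contDiff_id.sub contDiff_const).norm_sq ℝ)).neg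
  have hφ' : HasFDerivAt φ (-(c • 2 • (innerSL ℝ (x - w)).comp (ContinuousLinearMap.id ℝ E))) x :=
    (((hasFDerivAt_id x).sub_const w).norm_sq.const_mul c).neg
  have hvisc := hv φ hφ x hx (by simpa [φ] using hmin)
  rw [inner_gradient_left, hφ'.fderiv] at hvisc
  simpa only [neg_apply, smul_apply, ContinuousLinearMap.comp_id, innerSL_apply_apply, smul_eq_mul,
    nsmul_eq_mul, Nat.cast_ofNat, mul_assoc, mul_left_comm] using hvisc

theorem le_of_isMinOn_penalizedCost (hv : IsViscositySupersolutionOn γ g U v)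
    (hγ : LipschitzWith Lγ γ) (hg : LipschitzWith Lg g)
    (hX : ∀ s, 0 ≤ s → HasDerivAt X (-γ (X s)) s) {K : Set E} {c s : ℝ} {z : E}
    (hc : 0 ≤ c) (hs : s ∈ Ico 0 t) (hz : z ∈ U) (hK : K ∈ 𝓝 z)
    (hmin : IsMinOn (penalizedCost v g X ε c) (Icc 0 t ×ˢ K) (s, z)) :
    ε ≤ Lg * ‖z - X s‖ + 2 * Lγ * (c * ‖z - X s‖ ^ 2) := by
  set w := X s
  have hspace : IsLocalMin (fun z' => v z' + c * ‖z' - w‖ ^ 2) z := by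
    filter_upwards [hK] with z' hz'
    have := hmin (mk_mem_prod (Ico_subset_Icc_self hs) hz')
    simp only [penalizedCost, mem_ofPred_eq] at this
    linarith
  have htime : IsLocalMinOn (fun r => penalizedCost v g X ε c (r, z)) (Ici s) s := by
    filter_upwards [Icc_mem_nhdsGE hs.2] with r hr
    exact hmin (mk_mem_prod ⟨hs.1.trans hr.1, hr.2⟩ (mem_of_mem_nhds hK))
  have hderiv : HasDerivWithinAt (fun r => penalizedCost v g X ε c (r, z))
      (g w - ε + c * (2 * ⟪z - w, γ w⟫)) (Ici s) s := by
    have hgX : ContinuousOn (fun r => g (X r)) (Ici 0) := fun r hr =>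
      (hg.continuous.continuousAt.comp (hX r hr).continuousAt).continuousWithinAt
    have := ((hasDerivWithinAt_const s (Ici s) (v z)).add
      (hgX.integral_hasDerivWithinAt_Ici hs.1)).sub
      ((hasDerivWithinAt_id s (Ici s)).const_mul ε) |>.add
      ((((hX s hs.1).const_sub z).hasDerivWithinAt (s := Ici s)).norm_sq.const_mul c)
    simp only [neg_neg, zero_add, mul_one] at this
    exact this
  have hspace_ineq := hv.le_of_isLocalMin_add_mul_norm_sq hz c hspace
  have htime_ineq := htime.hasDerivWithinAt_Ici_nonneg hderiv
  have hgw : g w - g z ≤ Lg * ‖z - w‖ := by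
    have := hg.dist_le_mul w z
    rw [Real.dist_eq, dist_comm, dist_eq_norm] at this
    exact (le_abs_self _).trans this
  have hγw : ⟪z - w, γ w⟫ - ⟪z - w, γ z⟫ ≤ Lγ * ‖z - w‖ ^ 2 := by
    rw [← inner_sub_right]
    calc ⟪z - w, γ w - γ z⟫ ≤ ‖z - w‖ * ‖γ w - γ z‖ := real_inner_le_norm _ _
      _ ≤ ‖z - w‖ * (Lγ * ‖z - w‖) := by
        gcongr
        simpa [dist_eq_norm, norm_sub_rev z w] using hγ.dist_le_mul w z
      _ = Lγ * ‖z - w‖ ^ 2 := by ring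
  nlinarith [mul_le_mul_of_nonneg_left hγw hc]

theorem eventually_fst_eq_of_isMinOn_penalizedCost (hv : IsViscositySupersolutionOn γ g U v)
    (hγ : LipschitzWith Lγ γ) (hg : LipschitzWith Lg g)
    (hX : ∀ s, 0 ≤ s → HasDerivAt X (-γ (X s)) s) (hε : 0 < ε) {δ : ℝ} (hδ : 0 < δ)
    (hKU : cthickening δ (X '' Icc 0 t) ⊆ U) {p : ℕ → ℝ × E}
    (hpQ : ∀ n, p n ∈ Icc 0 t ×ˢ cthickening δ (X '' Icc 0 t))
    (hp : ∀ n, IsMinOn (penalizedCost v g X ε (2 ^ n)) (Icc 0 t ×ˢ cthickening δ (X '' Icc 0 t))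
      (p n))
    (hd : Tendsto (fun n => ‖(p n).2 - X (p n).1‖) atTop (𝓝 0))
    (hpen : Tendsto (fun n => 2 ^ n * ‖(p n).2 - X (p n).1‖ ^ 2) atTop (𝓝 0)) :
    ∀ᶠ n in atTop, (p n).1 = t := by
  have hsmall := ((hd.const_mul (Lg : ℝ)).add (hpen.const_mul (2 * (Lγ : ℝ)))).eventually_lt_const
    (by simpa using hε)
  filter_upwards [hsmall, hd.eventually_lt_const hδ] with n hsmall hnear
  by_contra hne
  have hs : (p n).1 ∈ Ico 0 t := ⟨(hpQ n).1.1, lt_of_le_of_ne (hpQ n).1.2 hne⟩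
  have hball : ball (X (p n).1) δ ⊆ cthickening δ (X '' Icc 0 t) :=
    ball_subset_closedBall.trans (closedBall_subset_cthickening (mem_image_of_mem X (hpQ n).1) δ)
  have hK : cthickening δ (X '' Icc 0 t) ∈ 𝓝 (p n).2 :=
    mem_of_superset (isOpen_ball.mem_nhds (by simpa [dist_eq_norm] using hnear)) hball
  have := le_of_isMinOn_penalizedCost hv hγ hg hX (by positivity) hs (hKU (hpQ n).2) hK (hp n)
  linarith

theorem integral_add_le_add_mul_of_mapsTo [ProperSpace E] (hU : IsOpen U)
    (hv : IsViscositySupersolutionOn γ g U v) (hv_lsc : LowerSemicontinuous v)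
    (hγ : LipschitzWith Lγ γ) (hg : LipschitzWith Lg g)
    (hX : ∀ s, 0 ≤ s → HasDerivAt X (-γ (X s)) s) (ht : 0 ≤ t) (hXU : MapsTo X (Icc 0 t) U)
    (hε : 0 < ε) :
    (∫ s in (0 : ℝ)..t, g (X s)) + v (X t) ≤ v (X 0) + ε * t := by
  have hXc : ContinuousOn X (Icc 0 t) := fun s hs => (hX s hs.1).continuousAt.continuousWithinAt
  have hXK : IsCompact (X '' Icc 0 t) := isCompact_Icc.image_of_continuousOn hXc
  obtain ⟨δ, hδ, hKU⟩ := hXK.exists_cthickening_subset_open hU hXU.image_subset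
  have hXQ : (0, X 0) ∈ Icc 0 t ×ˢ cthickening δ (X '' Icc 0 t) :=
    ⟨⟨le_rfl, ht⟩, self_subset_cthickening _ (mem_image_of_mem X ⟨le_rfl, ht⟩)⟩
  choose p hpQ hp using fun n : ℕ =>
    (lowerSemicontinuousOn_penalizedCost hv_lsc hg.continuous hXc ht _ ε (2 ^ n)).exists_isMinOn
      ⟨_, hXQ⟩ (isCompact_Icc.prod hXK.cthickening)
  set d := fun n => ‖(p n).2 - X (p n).1‖
  have hpen : Tendsto (fun n => 2 ^ n * d n ^ 2) atTop (𝓝 0) :=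
    tendsto_two_pow_mul_of_isMinOn_add_two_pow_mul (P := fun p => ‖p.2 - X p.1‖ ^ 2)
      (fun _ _ => by positivity) hXQ (by simp) hpQ hp
  have hd : Tendsto d atTop (𝓝 0) := by
    have hsq : Tendsto (fun n => d n ^ 2) atTop (𝓝 0) := squeeze_zero (fun n => by positivity)
      (fun n => le_mul_of_one_le_left (by positivity) (one_le_pow₀ one_le_two)) hpen
    simpa [Function.comp_def, Real.sqrt_sq_eq_abs, d] using
      (Real.continuous_sqrt.tendsto 0).comp hsq
  have hfst := eventually_fst_eq_of_isMinOn_penalizedCost hv hγ hg hX hε hδ hKU hpQ hp hd hpen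
  have hbound : ∀ᶠ n in atTop, v (p n).2 ≤ v (X 0) + ε * t - ∫ s in (0 : ℝ)..t, g (X s) := by
    filter_upwards [hfst] with n hn
    have hmin : penalizedCost v g X ε (2 ^ n) (p n) ≤ v (X 0) := by
      simpa using hp n hXQ
    simp only [penalizedCost, hn] at hmin
    have : 0 ≤ 2 ^ n * ‖(p n).2 - X t‖ ^ 2 := by positivity
    linarith
  have hlim : Tendsto (fun n => (p n).2) atTop (𝓝 (X t)) :=
    tendsto_iff_norm_sub_tendsto_zero.2 (hd.congr' (hfst.mono fun n hn => by simp [d, hn]))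
  have := (hv_lsc.isClosed_preimage _).mem_of_tendsto hlim hbound
  simp only [mem_preimage, mem_Iic] at this
  linarith

theorem integral_add_le_of_mapsTo_Icc [ProperSpace E] (hU : IsOpen U)
    (hv : IsViscositySupersolutionOn γ g U v) (hv_lsc : LowerSemicontinuous v)
    (hγ : LipschitzWith Lγ γ) (hg : LipschitzWith Lg g)
    (hX : ∀ s, 0 ≤ s → HasDerivAt X (-γ (X s)) s) (ht : 0 ≤ t) (hXU : MapsTo X (Icc 0 t) U) :
    (∫ s in (0 : ℝ)..t, g (X s)) + v (X t) ≤ v (X 0) := by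
  refine le_of_forall_pos_le_add fun ε hε => ?_
  have hε' : ε / (t + 1) * t ≤ ε := by
    rw [div_mul_eq_mul_div, div_le_iff₀ (by linarith)]
    nlinarith
  linarith [integral_add_le_add_mul_of_mapsTo hU hv hv_lsc hγ hg hX ht hXU
    (div_pos hε (by linarith : (0 : ℝ) < t + 1))]

theorem integral_add_le_of_mapsTo_Ico [ProperSpace E] (hU : IsOpen U)
    (hv : IsViscositySupersolutionOn γ g U v) (hv_lsc : LowerSemicontinuous v)
    (hγ : LipschitzWith Lγ γ) (hg : LipschitzWith Lg g)
    (hX : ∀ s, 0 ≤ s → HasDerivAt X (-γ (X s)) s) (ht : 0 < t) (hXU : MapsTo X (Ico 0 t) U) :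
    (∫ s in (0 : ℝ)..t, g (X s)) + v (X t) ≤ v (X 0) := by
  set h := fun u => (∫ s in (0 : ℝ)..u, g (X s)) + v (X u)
  have hXc : ContinuousOn X (Icc 0 t) := fun s hs => (hX s hs.1).continuousAt.continuousWithinAt
  have htt : t ∈ Icc 0 t := right_mem_Icc.2 ht.le
  have hlsc : LowerSemicontinuousWithinAt h (Icc 0 t) t :=
    (((hg.continuous.comp_continuousOn hXc).continuousOn_primitive_Icc ht.le) t
      htt).lowerSemicontinuousWithinAt.add
      ((hv_lsc.lowerSemicontinuousWithinAt univ (X t)).comp (hXc t htt) (mapsTo_univ _ _))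
  have hle : ∀ u ∈ Ico 0 t, h u ≤ v (X 0) := fun u hu =>
    integral_add_le_of_mapsTo_Icc hU hv hv_lsc hγ hg hX hu.1
      (hXU.mono_left (Icc_subset_Ico_right hu.2))
  have : (𝓝[Ico 0 t] t).NeBot :=
    mem_closure_iff_nhdsWithin_neBot.1 (by rwa [closure_Ico ht.ne])
  by_contra! hlt
  obtain ⟨u, hu, hltu⟩ := (eventually_mem_nhdsWithin.and
    ((hlsc _ hlt).filter_mono (nhdsWithin_mono _ Ico_subset_Icc_self))).exists
  exact (hle u hu).not_gt hltu

end Viscosity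

theorem transport_supersolution_general
    {N : ℕ}
    (Ω : Set (EN N))
    (γ : EN N → EN N) (g : EN N → ℝ)
    (Lγ Lg : NNReal) (hγlip : LipschitzWith Lγ γ) (hglip : LipschitzWith Lg g)
    -- the flow of `-γ`
    (X : EN N → ℝ → EN N)
    (hX0 : ∀ y, X y 0 = y)
    (hXode : ∀ y t, 0 ≤ t → HasDerivAt (X y) (-(γ (X y t))) t)
    -- the hitting time of `closure Ω`
    (τ : EN N → ℝ)
    (hτ : ∀ y, τ y = sInf {t : ℝ | 0 < t ∧ X y t ∈ closure Ω})
    -- `v` : locally bounded, lsc, viscosity supersolution of `Dv·γ ≥ g` in `(closure Ω)ᶜ`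
    (v : EN N → ℝ)
    (hv_lsc : LowerSemicontinuous v)
    (hv_visc : ∀ φ : EN N → ℝ, ContDiff ℝ 2 φ →
      ∀ x ∉ closure Ω, IsLocalMin (fun z => v z - φ z) x →
        g x ≤ ⟪gradient φ x, γ x⟫)
    (y : EN N) (hy : y ∉ closure Ω)
    (t : ℝ) (ht0 : 0 < t) (ht : t ≤ τ y) :
    (∫ s in (0:ℝ)..t, g (X y s)) + v (X y t) ≤ v y := by
  have hXU : MapsTo (X y) (Ico 0 t) (closure Ω)ᶜ :=
    mapsTo_Ico_compl_of_le_sInf (by rwa [hX0]) (hτ y ▸ ht)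
  simpa only [hX0] using integral_add_le_of_mapsTo_Ico isClosed_closure.isOpen_compl
    (fun φ hφ x hx => hv_visc φ hφ x hx) hv_lsc hγlip hglip (hXode y) ht0 hXU

/-- Lemma 2.1 (b).  Let `Ω ⊆ ℝ^N` be open, `γ, g` bounded Lipschitz,
`X y` the unique solution of `Ẋ = -γ(X)`, `X y 0 = y`, and
`τ y = inf {t > 0 : X y t ∈ closure Ω}`, assumed finite for `y ∉ closure Ω` (BC2).
If `v` is locally bounded, lower semicontinuous and satisfies `Dv·γ ≥ g` in
`(closure Ω)ᶜ` in the viscosity sense, then for every `y ∉ closure Ω` and every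
`0 < t ≤ τ y` one has `v y ≥ ∫₀ᵗ g(X y s) ds + v (X y t)`. -/
theorem transport_supersolution
    {N : ℕ} (hN : 1 ≤ N)
    (Ω : Set (EN N)) (hΩ : IsOpen Ω)
    (γ : EN N → EN N) (g : EN N → ℝ)
    (Lγ Lg : NNReal) (hγlip : LipschitzWith Lγ γ) (hglip : LipschitzWith Lg g)
    (Cγ Cg : ℝ) (hγbd : ∀ x, ‖γ x‖ ≤ Cγ) (hgbd : ∀ x, |g x| ≤ Cg)
    -- the flow of `-γ`
    (X : EN N → ℝ → EN N)
    (hX0 : ∀ y, X y 0 = y)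
    (hXode : ∀ y t, 0 ≤ t → HasDerivAt (X y) (-(γ (X y t))) t)
    -- the hitting time of `closure Ω`
    (τ : EN N → ℝ)
    (hτ : ∀ y, τ y = sInf {t : ℝ | 0 < t ∧ X y t ∈ closure Ω})
    -- (BC2): the trajectory reaches `closure Ω` in finite time
    (hBC2 : ∀ y ∉ closure Ω, {t : ℝ | 0 < t ∧ X y t ∈ closure Ω}.Nonempty)
    -- `v` : locally bounded, lsc, viscosity supersolution of `Dv·γ ≥ g` in `(closure Ω)ᶜ`
    (v : EN N → ℝ)
    (hv_locbdd : ∀ x : EN N, ∃ C : ℝ, ∀ᶠ y in 𝓝 x, |v y| ≤ C)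
    (hv_lsc : LowerSemicontinuous v)
    (hv_visc : ∀ φ : EN N → ℝ, ContDiff ℝ 2 φ →
      ∀ x ∉ closure Ω, IsLocalMin (fun z => v z - φ z) x →
        g x ≤ ⟪gradient φ x, γ x⟫)
    (y : EN N) (hy : y ∉ closure Ω)
    (t : ℝ) (ht0 : 0 < t) (ht : t ≤ τ y) :
    (∫ s in (0:ℝ)..t, g (X y s)) + v (X y t) ≤ v y :=
  transport_supersolution_general Ω γ g Lγ Lg hγlip hglip X hX0 hXode τ hτ v hv_lsc hv_visc y hy t
    ht0 ht
end
end

section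
/- Assume γ and g satisfy (BC1') and assume (BC2). Then the transport inequalities along trajectories still hold: (a) if u : ℝ^N → ℝ is locally bounded, upper semicontinuous and satisfies Du·γ ≤ g in Ω̄^c in the viscosity sense, then u(y) ≤ ∫₀ᵗ g(X_y(s)) ds + u(X_y(t)) for every y ∉ Ω̄ and 0 < t ≤ τ_y; (b) if v : ℝ^N → ℝ is locally bounded, lower semicontinuous and satisfies Dv·γ ≥ g in Ω̄^c in the viscosity sense, then v(y) ≥ ∫₀ᵗ g(X_y(s)) ds + v(X_y(t)) for every y ∉ Ω̄ and 0 < t ≤ τ_y. Here, for y ∉ Ω̄, X_y denotes the unique solution of Ẋ_y(t) = −γ(X_y(t)), X_y(0) = y, which exists and remains in Ω̄^c on [0, τ_y) and extends continuously to t = τ_y. -/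
/-!
Doubling of variables along the trajectory. If `u (Y 0)` exceeded `∫₀ᵗ g(Y) + u (Y t)` by more
than `δ (t + 1)`, maximise `u x + ∫₀ˢ g(Y) + δ s - c e^{-2Ks} ‖x - Y s‖²` over a compact tube
around the trajectory. For large `c` the maximum `(x, s)` lies close to the trajectory and
before time `t`. Testing the subsolution inequality in `x` and differentiating from the right in
`s` gives `g (Y s) + δ ≤ g x`: the `s`-derivative of the weight `e^{-2Ks}` compensates the defect
`-K ‖x - Y s‖²` allowed by the one-sided Lipschitz condition. Since `x` is close to `Y s`, this
contradicts the uniform continuity of `g`. Up to the hitting time itself one passes to the limit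
by upper semicontinuity, and the supersolution case is the subsolution case for `-v`, `-g`.
-/

open MeasureTheory Filter Set Metric
open scoped Topology RealInnerProductSpace

noncomputable section

theorem UpperSemicontinuousAt.le_of_tendsto {X α : Type*} [TopologicalSpace X] {u : X → ℝ}
    {x : X} (hu : UpperSemicontinuousAt u x) {l : Filter α} [l.NeBot] {p : α → X}
    {f : α → ℝ} {A : ℝ} (hp : Tendsto p l (𝓝 x)) (hf : Tendsto f l (𝓝 A))
    (hle : ∀ᶠ i in l, f i ≤ u (p i)) : A ≤ u x := by
  refine le_of_forall_gt_imp_ge_of_dense fun c hc => _root_.le_of_tendsto hf ?_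
  filter_upwards [hp.eventually (hu c hc), hle] with i hlt hle
  exact hle.trans hlt.le

theorem HasDerivAt.hasDerivWithinAt_Ici_comp_projIcc {F : Type*} [NormedAddCommGroup F]
    [NormedSpace ℝ F] {f : ℝ → F} {f' : F} {a b s : ℝ} (hab : a ≤ b) (hs : s ∈ Ico a b)
    (hf : HasDerivAt f f' s) : HasDerivWithinAt (fun r => f (projIcc a b hab r)) f' (Ici s) s := by
  have hproj : EqOn (fun r => f (projIcc a b hab r)) f (Icc s b) := fun r hr => by
    simp only [projIcc_of_mem hab ⟨hs.1.trans hr.1, hr.2⟩]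
  exact (hf.hasDerivWithinAt.congr hproj (hproj ⟨le_rfl, hs.2.le⟩)).mono_of_mem_nhdsWithin
    (Icc_mem_nhdsGE hs.2)

section Penalty

variable {E : Type*} [NormedAddCommGroup E]

def penalty (K c : ℝ) (Y : ℝ → E) (x : E) (s : ℝ) : ℝ :=
  c * Real.exp (-(2 * K * s)) * ‖x - Y s‖ ^ 2

theorem penalty_self (K c : ℝ) (Y : ℝ → E) (s : ℝ) : penalty K c Y (Y s) s = 0 := by
  simp [penalty]

theorem penalty_nonneg {K c : ℝ} {Y : ℝ → E} {x : E} {s : ℝ} (hc : 0 ≤ c) :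
    0 ≤ penalty K c Y x s := by
  unfold penalty; positivity

theorem norm_sub_lt_of_penalty_le {K B m t s : ℝ} {Y : ℝ → E} {x : E} (hB : 0 ≤ B) (hm : 0 < m)
    (hs : s ∈ Icc 0 t)
    (h : penalty K ((B + 1) / (Real.exp (-(2 * |K| * t)) * m ^ 2)) Y x s ≤ B) :
    ‖x - Y s‖ < m := by
  by_contra! hfar
  have hweight : Real.exp (-(2 * |K| * t)) ≤ Real.exp (-(2 * K * s)) := by
    gcongr
    exacts [hs.1, le_abs_self K, hs.2]
  set w₀ := Real.exp (-(2 * |K| * t))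
  have hw₀ : 0 < w₀ := Real.exp_pos _
  have hB1 : (B + 1) / (w₀ * m ^ 2) * w₀ * m ^ 2 = B + 1 := by field_simp
  have : (B + 1) / (w₀ * m ^ 2) * w₀ * m ^ 2 ≤ penalty K ((B + 1) / (w₀ * m ^ 2)) Y x s := by
    unfold penalty; gcongr
  linarith

theorem exists_isMaxOn_sub_penalty {T : Set E} (hT : IsCompact T) {u : E → ℝ}
    (hu : UpperSemicontinuous u) {a : ℝ → ℝ} (ha : Continuous a)
    {Y : ℝ → E} (hY : Continuous Y) (K : ℝ) {t m : ℝ} (ht : 0 ≤ t) (hY0 : Y 0 ∈ T)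
    (hm : 0 < m) :
    ∃ c, 0 ≤ c ∧ ∃ x ∈ T, ∃ s ∈ Icc 0 t,
      IsMaxOn (fun p : E × ℝ => u p.1 + a p.2 - penalty K c Y p.1 p.2) (T ×ˢ Icc 0 t) (x, s) ∧
      ‖x - Y s‖ < m := by
  have hS : IsCompact (T ×ˢ Icc 0 t) := hT.prod isCompact_Icc
  have h0 : (Y 0, (0:ℝ)) ∈ T ×ˢ Icc 0 t := ⟨hY0, le_rfl, ht⟩
  have hV : UpperSemicontinuous fun p : E × ℝ => u p.1 + a p.2 :=
    (hu.comp continuous_fst).add (ha.comp continuous_snd).upperSemicontinuous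
  obtain ⟨M, hM⟩ := (hV.upperSemicontinuousOn _).bddAbove_of_isCompact hS
  have hM0 : u (Y 0) + a 0 ≤ M := hM ⟨_, h0, rfl⟩
  set c := (M - (u (Y 0) + a 0) + 1) / (Real.exp (-(2 * |K| * t)) * m ^ 2)
  have hpen : Continuous fun p : E × ℝ => penalty K c Y p.1 p.2 := by unfold penalty; fun_prop
  have hΦ : UpperSemicontinuous fun p : E × ℝ => u p.1 + a p.2 - penalty K c Y p.1 p.2 := by
    simpa only [Pi.neg_apply, sub_eq_add_neg] using hV.add hpen.neg.upperSemicontinuous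
  obtain ⟨⟨x, s⟩, ⟨hxT, hs⟩, hmax⟩ := (hΦ.upperSemicontinuousOn _).exists_isMaxOn ⟨_, h0⟩ hS
  refine ⟨c, by positivity, x, hxT, s, hs, hmax,
    norm_sub_lt_of_penalty_le (K := K) (B := M - (u (Y 0) + a 0)) (by linarith) hm hs ?_⟩
  have hΦ0 := isMaxOn_iff.mp hmax _ h0
  rw [penalty_self, sub_zero] at hΦ0
  linarith [hM ⟨(x, s), ⟨hxT, hs⟩, rfl⟩]

variable [InnerProductSpace ℝ E]

theorem HasDerivWithinAt.penalty {K c : ℝ} {Y : ℝ → E} {Y' x : E} {S : Set ℝ} {s : ℝ}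
    (hY : HasDerivWithinAt Y Y' S s) :
    HasDerivWithinAt (penalty K c Y x) (c * Real.exp (-(2 * K * s)) *
      (-(2 * K) * ‖x - Y s‖ ^ 2 - 2 * ⟪x - Y s, Y'⟫)) S s := by
  have hweight : HasDerivWithinAt (fun r => Real.exp (-(2 * K * r)))
      (Real.exp (-(2 * K * s)) * -(2 * K)) S s :=
    (((hasDerivAt_id s).const_mul (2 * K)).neg.exp.hasDerivWithinAt).congr_deriv (by simp)
  have h := (hweight.const_mul c).mul (hY.const_sub x).norm_sq
  rw [inner_neg_right] at h
  exact h.congr_deriv (by ring)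

end Penalty

section Viscosity

variable {E : Type*} [NormedAddCommGroup E] [InnerProductSpace ℝ E]

def OneSidedLipschitzOn (K : ℝ) (γ : E → E) (O : Set E) : Prop :=
  ∀ x ∈ O, ∀ y ∈ O, -(K * ‖x - y‖ ^ 2) ≤ ⟪γ x - γ y, x - y⟫

variable [CompleteSpace E]

def IsViscositySubsolution (O : Set E) (γ : E → E) (g u : E → ℝ) : Prop :=
  ∀ φ : E → ℝ, ContDiff ℝ 2 φ → ∀ x ∈ O,
    IsLocalMax (fun z => u z - φ z) x → ⟪gradient φ x, γ x⟫ ≤ g x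

def IsViscositySupersolution (O : Set E) (γ : E → E) (g v : E → ℝ) : Prop :=
  ∀ φ : E → ℝ, ContDiff ℝ 2 φ → ∀ x ∈ O,
    IsLocalMin (fun z => v z - φ z) x → g x ≤ ⟪gradient φ x, γ x⟫

variable {O : Set E} {γ : E → E} {g u v : E → ℝ}

theorem IsViscositySupersolution.neg (hv : IsViscositySupersolution O γ g v) :
    IsViscositySubsolution O γ (-g) (-v) := by
  intro φ hφ x hx hmax
  have hmin : IsLocalMin (fun z => v z - (-φ) z) x := by
    filter_upwards [hmax] with z hz
    simp only [Pi.neg_apply] at hz ⊢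
    linarith
  have h := hv (-φ) hφ.neg x hx hmin
  rw [inner_gradient_left, fderiv_neg] at h
  rw [inner_gradient_left, Pi.neg_apply]
  simpa using neg_le_neg h

theorem IsViscositySubsolution.two_mul_inner_le (hu : IsViscositySubsolution O γ g u)
    {b : ℝ} {p x : E} (hx : x ∈ O) (hmax : IsLocalMax (fun z => u z - b * ‖z - p‖ ^ 2) x) :
    2 * b * ⟪x - p, γ x⟫ ≤ g x := by
  have hφ : ContDiff ℝ 2 fun z => b * ‖z - p‖ ^ 2 :=
    contDiff_const.mul ((contDiff_id.sub contDiff_const).norm_sq ℝ)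
  have hderiv : HasFDerivAt (fun z => b * ‖z - p‖ ^ 2) _ x :=
    (((hasFDerivAt_id x).sub_const p).norm_sq).const_mul b
  have h := hu _ hφ x hx hmax
  rw [inner_gradient_left, hderiv.fderiv] at h
  simp only [id_eq, ContinuousLinearMap.comp_id, smul_apply, coe_innerSL_apply, nsmul_eq_mul,
    Nat.cast_ofNat, smul_eq_mul] at h
  linarith

theorem IsViscositySubsolution.le_of_isMaxOn_penalty (hu : IsViscositySubsolution O γ g u)
    {K : ℝ} (hγ : OneSidedLipschitzOn K γ O) {Y : ℝ → E} {a : ℝ → ℝ} {a' c s t : ℝ} {x : E}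
    {T : Set E} (hc : 0 ≤ c) (hx : x ∈ O) (hT : T ∈ 𝓝 x) (hYs : Y s ∈ O) (hs : s ∈ Ico 0 t)
    (hY : HasDerivWithinAt Y (-γ (Y s)) (Ici s) s) (ha : HasDerivWithinAt a a' (Ici s) s)
    (hmax : IsMaxOn (fun p : E × ℝ => u p.1 + a p.2 - penalty K c Y p.1 p.2) (T ×ˢ Icc 0 t)
      (x, s)) :
    a' ≤ g x := by
  have hmax_x : IsLocalMax (fun z => u z - penalty K c Y z s) x := by
    filter_upwards [hT] with z hz
    have := isMaxOn_iff.mp hmax _ (mk_mem_prod hz (Ico_subset_Icc_self hs))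
    dsimp only at this ⊢
    linarith
  have hmax_s : IsLocalMaxOn (fun r => a r - penalty K c Y x r) (Ici s) s := by
    filter_upwards [Icc_mem_nhdsGE_of_mem hs] with r hr
    have := isMaxOn_iff.mp hmax _ (mk_mem_prod (mem_of_mem_nhds hT) hr)
    dsimp only at this ⊢
    linarith
  set w := c * Real.exp (-(2 * K * s))
  have hw : 0 ≤ w := by positivity
  have hspace : 2 * w * ⟪x - Y s, γ x⟫ ≤ g x := hu.two_mul_inner_le hx hmax_x
  have htime := hmax_s.hasDerivWithinAt_Ici_nonpos (ha.sub hY.penalty)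
  have hlip : -(K * ‖x - Y s‖ ^ 2) ≤ ⟪x - Y s, γ x⟫ - ⟪x - Y s, γ (Y s)⟫ := by
    rw [← inner_sub_right, real_inner_comm]
    exact hγ x hx (Y s) hYs
  rw [inner_neg_right] at htime
  nlinarith [mul_le_mul_of_nonneg_left hlip hw]

end Viscosity

section Transport

variable {E : Type*} [NormedAddCommGroup E] [InnerProductSpace ℝ E] [FiniteDimensional ℝ E]
  {O : Set E} {γ : E → E} {g u : E → ℝ} {K : ℝ}

theorem IsViscositySubsolution.le_integral_add_add_mul (hu : IsViscositySubsolution O γ g u)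
    (husc : UpperSemicontinuous u) (hO : IsOpen O) (hg : ContinuousOn g O)
    (hγ : OneSidedLipschitzOn K γ O) {Y : ℝ → E} (hY : Continuous Y) (hYO : ∀ s, Y s ∈ O)
    {t : ℝ} (ht : 0 ≤ t) (hYderiv : ∀ s ∈ Ico 0 t, HasDerivWithinAt Y (-γ (Y s)) (Ici s) s)
    {δ : ℝ} (hδ : 0 < δ) :
    u (Y 0) ≤ (∫ s in (0:ℝ)..t, g (Y s)) + u (Y t) + δ * (t + 1) := by
  have hgY : Continuous fun s => g (Y s) := hg.comp_continuous hY hYO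
  set a : ℝ → ℝ := fun s => (∫ r in (0:ℝ)..s, g (Y r)) + δ * s
  have ha : ∀ s, HasDerivAt a (g (Y s) + δ) s := fun s =>
    (hgY.integral_hasStrictDerivAt 0 s).hasDerivAt.add
      ((hasDerivAt_id s).const_mul δ |>.congr_deriv (mul_one δ))
  by_contra! hcon
  have hΓ : IsCompact (Y '' Icc 0 t) := isCompact_Icc.image hY
  obtain ⟨r, hr, hrO⟩ :=
    hΓ.exists_cthickening_subset_open hO (image_subset_iff.2 fun s _ => hYO s)
  set T := cthickening r (Y '' Icc 0 t)
  have hYT : ∀ s ∈ Icc 0 t, Y s ∈ T := fun s hs => self_subset_cthickening _ ⟨s, hs, rfl⟩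
  obtain ⟨ρ₁, hρ₁, hu_t⟩ :=
    Metric.eventually_nhds_iff.1 (husc (Y t) _ (lt_add_of_pos_right _ hδ))
  obtain ⟨ρ₂, hρ₂, hg_uc⟩ := Metric.uniformContinuousOn_iff.1
    (hΓ.cthickening.uniformContinuousOn_of_continuous (hg.mono hrO)) δ hδ
  obtain ⟨c, hc, x, hxT, s, hs, hmax, hclose⟩ := exists_isMaxOn_sub_penalty hΓ.cthickening husc
    (continuous_iff_continuousAt.2 fun s => (ha s).continuousAt) hY K ht (hYT 0 ⟨le_rfl, ht⟩)
    (lt_min hr (lt_min hρ₁ hρ₂))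
  have hst : s < t := by
    refine lt_of_le_of_ne hs.2 fun hst => ?_
    subst hst
    have hux : u x < u (Y s) + δ := hu_t (by
      rw [dist_eq_norm]; exact hclose.trans_le ((min_le_right _ _).trans (min_le_left _ _)))
    have hΦ := isMaxOn_iff.mp hmax _ (mk_mem_prod (hYT 0 ⟨le_rfl, hs.1⟩) ⟨le_rfl, hs.1⟩)
    simp only [a, penalty_self, intervalIntegral.integral_same, mul_zero, add_zero,
      sub_zero] at hΦ
    linarith [penalty_nonneg (K := K) (Y := Y) (x := x) (s := s) hc]
  have hT : T ∈ 𝓝 x := by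
    refine mem_of_superset (isOpen_ball.mem_nhds (mem_ball.2 ?_))
      ((ball_subset_thickening (mem_image_of_mem Y hs) r).trans (thickening_subset_cthickening _ _))
    rw [dist_eq_norm]
    exact hclose.trans_le (min_le_left _ _)
  have hslope : g (Y s) + δ ≤ g x := hu.le_of_isMaxOn_penalty hγ hc (hrO hxT) hT (hYO s)
    ⟨hs.1, hst⟩ (hYderiv s ⟨hs.1, hst⟩) (ha s).hasDerivWithinAt hmax
  have hgx : dist (g x) (g (Y s)) < δ := hg_uc x hxT (Y s) (hYT s hs) (by
    rw [dist_eq_norm]; exact hclose.trans_le ((min_le_right _ _).trans (min_le_right _ _)))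
  rw [Real.dist_eq, abs_lt] at hgx
  linarith

theorem IsViscositySubsolution.le_integral_add (hu : IsViscositySubsolution O γ g u)
    (husc : UpperSemicontinuous u) (hO : IsOpen O) (hg : ContinuousOn g O)
    (hγ : OneSidedLipschitzOn K γ O) {Y : ℝ → E} (hY : Continuous Y) (hYO : ∀ s, Y s ∈ O)
    {t : ℝ} (ht : 0 ≤ t) (hYderiv : ∀ s ∈ Ico 0 t, HasDerivWithinAt Y (-γ (Y s)) (Ici s) s) :
    u (Y 0) ≤ (∫ s in (0:ℝ)..t, g (Y s)) + u (Y t) := by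
  refine le_of_forall_pos_le_add fun ε hε => ?_
  have := hu.le_integral_add_add_mul husc hO hg hγ hY hYO ht hYderiv
    (div_pos hε (by linarith : (0:ℝ) < t + 1))
  rwa [div_mul_cancel₀ _ (by linarith : t + 1 ≠ 0)] at this

theorem IsViscositySubsolution.le_integral_add_of_lt (hu : IsViscositySubsolution O γ g u)
    (husc : UpperSemicontinuous u) (hO : IsOpen O) (hg : ContinuousOn g O)
    (hγ : OneSidedLipschitzOn K γ O) {X : ℝ → E} {τ t : ℝ}
    (hXO : ∀ s, 0 ≤ s → s < τ → X s ∈ O)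
    (hXode : ∀ s, 0 ≤ s → s < τ → HasDerivAt X (-γ (X s)) s)
    (hXcont : ContinuousOn X (Icc 0 τ)) (ht0 : 0 ≤ t) (ht : t < τ) :
    u (X 0) ≤ (∫ s in (0:ℝ)..t, g (X s)) + u (X t) := by
  set Y : ℝ → E := fun r => X (projIcc 0 t ht0 r)
  have hproj : ∀ r, (projIcc 0 t ht0 r : ℝ) ∈ Icc 0 t := fun r => (projIcc 0 t ht0 r).2
  have hYX : EqOn Y X (Icc 0 t) := fun r hr => by simp only [Y, projIcc_of_mem ht0 hr]
  have hY : Continuous Y := (hXcont.mono (Icc_subset_Icc_right ht.le)).comp_continuous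
    (continuous_subtype_val.comp continuous_projIcc) hproj
  have hYO : ∀ r, Y r ∈ O := fun r => hXO _ (hproj r).1 ((hproj r).2.trans_lt ht)
  have hYderiv : ∀ s ∈ Ico 0 t, HasDerivWithinAt Y (-γ (Y s)) (Ici s) s := fun s hs => by
    rw [hYX (Ico_subset_Icc_self hs)]
    exact (hXode s hs.1 (hs.2.trans ht)).hasDerivWithinAt_Ici_comp_projIcc ht0 hs
  have hintegral : ∫ s in (0:ℝ)..t, g (Y s) = ∫ s in (0:ℝ)..t, g (X s) :=
    intervalIntegral.integral_congr fun r hr => congrArg g (hYX (uIcc_of_le ht0 ▸ hr))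
  have := hu.le_integral_add husc hO hg hγ hY hYO ht0 hYderiv
  rwa [hYX ⟨le_rfl, ht0⟩, hYX ⟨ht0, le_rfl⟩, hintegral] at this

theorem IsViscositySubsolution.le_integral_add_of_le (hu : IsViscositySubsolution O γ g u)
    (husc : UpperSemicontinuous u) (hO : IsOpen O) (hg : ContinuousOn g O)
    (hγ : OneSidedLipschitzOn K γ O) {C : ℝ} (hgC : ∀ x ∈ O, |g x| ≤ C) {X : ℝ → E} {τ t : ℝ}
    (hXO : ∀ s, 0 ≤ s → s < τ → X s ∈ O)
    (hXode : ∀ s, 0 ≤ s → s < τ → HasDerivAt X (-γ (X s)) s)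
    (hXcont : ContinuousOn X (Icc 0 τ)) (ht0 : 0 < t) (ht : t ≤ τ) :
    u (X 0) ≤ (∫ s in (0:ℝ)..t, g (X s)) + u (X t) := by
  have hint : IntegrableOn (fun s => g (X s)) (uIcc 0 t) := by
    rw [uIcc_of_le ht0.le, integrableOn_Icc_iff_integrableOn_Ico]
    refine ⟨?_, .restrict_of_bounded (C := C) measure_Ico_lt_top
      (ae_restrict_of_forall_mem measurableSet_Ico fun s hs => ?_)⟩
    · refine ContinuousOn.aestronglyMeasurable ?_ measurableSet_Ico
      exact hg.comp (hXcont.mono fun s hs => ⟨hs.1, hs.2.le.trans ht⟩)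
        fun s hs => hXO s hs.1 (hs.2.trans_le ht)
    · exact (Real.norm_eq_abs _).trans_le (hgC _ (hXO s hs.1 (hs.2.trans_le ht)))
  have hprim : Tendsto (fun s => ∫ r in (0:ℝ)..s, g (X r)) (𝓝[<] t)
      (𝓝 (∫ r in (0:ℝ)..t, g (X r))) :=
    (intervalIntegral.continuousOn_primitive_interval hint t right_mem_uIcc).tendsto.mono_left
      (nhdsWithin_le_of_mem (by rw [uIcc_of_le ht0.le]; exact Icc_mem_nhdsLT ht0))
  have hXt : Tendsto X (𝓝[<] t) (𝓝 (X t)) :=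
    (hXcont t ⟨ht0.le, ht⟩).tendsto.mono_left
      (nhdsWithin_le_of_mem (Icc_mem_nhdsLT_of_mem ⟨ht0, ht⟩))
  have hle : ∀ᶠ s in 𝓝[<] t, u (X 0) - ∫ r in (0:ℝ)..s, g (X r) ≤ u (X s) := by
    filter_upwards [Ioo_mem_nhdsLT ht0] with s hs
    have := hu.le_integral_add_of_lt husc hO hg hγ hXO hXode hXcont hs.1.le (hs.2.trans_le ht)
    linarith
  have := UpperSemicontinuousAt.le_of_tendsto (husc (X t)) hXt (tendsto_const_nhds.sub hprim) hle
  linarith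

end Transport

theorem transport_onesided_Lipschitz_general
    {N : ℕ}
    (Ω : Set (EN N))
    (γ : EN N → EN N) (g : EN N → ℝ)
    -- (BC1') : bounded, continuous and one-sided Lipschitz on `(closure Ω)ᶜ`
    (hgcont : ContinuousOn g (closure Ω)ᶜ)
    (Cg : ℝ) (hgbd : ∀ x ∈ (closure Ω)ᶜ, |g x| ≤ Cg)
    (K : ℝ)
    (hOSL : ∀ x ∈ (closure Ω)ᶜ, ∀ y ∈ (closure Ω)ᶜ,
      -(K * ‖x - y‖ ^ 2) ≤ ⟪γ x - γ y, x - y⟫)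
    -- the flow of `-γ` up to the hitting time, and the hitting time itself
    (X : EN N → ℝ → EN N) (τ : EN N → ℝ)
    (hX0 : ∀ y, X y 0 = y)
    (hXstay : ∀ y ∉ closure Ω, ∀ t, 0 ≤ t → t < τ y → X y t ∉ closure Ω)
    (hXode : ∀ y ∉ closure Ω, ∀ t, 0 ≤ t → t < τ y → HasDerivAt (X y) (-(γ (X y t))) t)
    (hXcont : ∀ y ∉ closure Ω, ContinuousOn (X y) (Set.Icc 0 (τ y))) :
    -- (a) subsolution inequality
    (∀ u : EN N → ℝ,
      (∀ x : EN N, ∃ C : ℝ, ∀ᶠ y in 𝓝 x, |u y| ≤ C) →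
      UpperSemicontinuous u →
      (∀ φ : EN N → ℝ, ContDiff ℝ 2 φ →
        ∀ x ∉ closure Ω, IsLocalMax (fun z => u z - φ z) x →
          ⟪gradient φ x, γ x⟫ ≤ g x) →
      ∀ y ∉ closure Ω, ∀ t : ℝ, 0 < t → t ≤ τ y →
        u y ≤ (∫ s in (0:ℝ)..t, g (X y s)) + u (X y t)) ∧
    -- (b) supersolution inequality
    (∀ v : EN N → ℝ,
      (∀ x : EN N, ∃ C : ℝ, ∀ᶠ y in 𝓝 x, |v y| ≤ C) →
      LowerSemicontinuous v →
      (∀ φ : EN N → ℝ, ContDiff ℝ 2 φ →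
        ∀ x ∉ closure Ω, IsLocalMin (fun z => v z - φ z) x →
          g x ≤ ⟪gradient φ x, γ x⟫) →
      ∀ y ∉ closure Ω, ∀ t : ℝ, 0 < t → t ≤ τ y →
        (∫ s in (0:ℝ)..t, g (X y s)) + v (X y t) ≤ v y) := by
  have hO : IsOpen (closure Ω)ᶜ := isClosed_closure.isOpen_compl
  have hγ : OneSidedLipschitzOn K γ (closure Ω)ᶜ := hOSL
  refine ⟨fun u _ husc hu y hy t ht0 ht => ?_, fun v _ hlsc hv y hy t ht0 ht => ?_⟩
  · have hsub : IsViscositySubsolution (closure Ω)ᶜ γ g u := hu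
    simpa only [hX0] using hsub.le_integral_add_of_le husc hO hgcont hγ hgbd (hXstay y hy)
      (hXode y hy) (hXcont y hy) ht0 ht
  · have hsuper : IsViscositySupersolution (closure Ω)ᶜ γ g v := hv
    have := hsuper.neg.le_integral_add_of_le hlsc.neg hO hgcont.neg hγ
      (fun x hx => (abs_neg (g x)).trans_le (hgbd x hx)) (hXstay y hy) (hXode y hy)
      (hXcont y hy) ht0 ht
    simp only [Pi.neg_apply, intervalIntegral.integral_neg, hX0] at this
    linarith

/-- Lemma 2.2.  Under (BC1') — `γ, g` bounded and continuous on
`(closure Ω)ᶜ` with the one-sided Lipschitz condition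
`(γ(x) − γ(y))·(x − y) ≥ −K|x − y|²` — and (BC2), the transport inequalities of
Lemma 2.1 remain valid: (a) a locally bounded usc viscosity subsolution `u` of
`Du·γ ≤ g` in `(closure Ω)ᶜ` satisfies `u y ≤ ∫₀ᵗ g(X y s) ds + u (X y t)` and
(b) a locally bounded lsc viscosity supersolution `v` of `Dv·γ ≥ g` satisfies
`v y ≥ ∫₀ᵗ g(X y s) ds + v (X y t)`, for every `y ∉ closure Ω` and `0 < t ≤ τ y`.
Here `X y` solves `Ẋ = −γ(X)`, `X y 0 = y`, remains in `(closure Ω)ᶜ` on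
`[0, τ y)` and extends continuously to `t = τ y`. -/
theorem transport_onesided_Lipschitz
    {N : ℕ} (hN : 1 ≤ N)
    (Ω : Set (EN N)) (hΩ : IsOpen Ω)
    (γ : EN N → EN N) (g : EN N → ℝ)
    -- (BC1') : bounded, continuous and one-sided Lipschitz on `(closure Ω)ᶜ`
    (hγcont : ContinuousOn γ (closure Ω)ᶜ) (hgcont : ContinuousOn g (closure Ω)ᶜ)
    (Cγ Cg : ℝ) (hγbd : ∀ x ∈ (closure Ω)ᶜ, ‖γ x‖ ≤ Cγ) (hgbd : ∀ x ∈ (closure Ω)ᶜ, |g x| ≤ Cg)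
    (K : ℝ) (hK : 0 ≤ K)
    (hOSL : ∀ x ∈ (closure Ω)ᶜ, ∀ y ∈ (closure Ω)ᶜ,
      -(K * ‖x - y‖ ^ 2) ≤ ⟪γ x - γ y, x - y⟫)
    -- the flow of `-γ` up to the hitting time, and the hitting time itself
    (X : EN N → ℝ → EN N) (τ : EN N → ℝ)
    (hX0 : ∀ y, X y 0 = y)
    (hXstay : ∀ y ∉ closure Ω, ∀ t, 0 ≤ t → t < τ y → X y t ∉ closure Ω)
    (hXode : ∀ y ∉ closure Ω, ∀ t, 0 ≤ t → t < τ y → HasDerivAt (X y) (-(γ (X y t))) t)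
    (hXcont : ∀ y ∉ closure Ω, ContinuousOn (X y) (Set.Icc 0 (τ y)))
    (hτ : ∀ y ∉ closure Ω, τ y = sInf {t : ℝ | 0 < t ∧ X y t ∈ closure Ω})
    -- (BC2)
    (hBC2 : ∀ y ∉ closure Ω, {t : ℝ | 0 < t ∧ X y t ∈ closure Ω}.Nonempty) :
    -- (a) subsolution inequality
    (∀ u : EN N → ℝ,
      (∀ x : EN N, ∃ C : ℝ, ∀ᶠ y in 𝓝 x, |u y| ≤ C) →
      UpperSemicontinuous u →
      (∀ φ : EN N → ℝ, ContDiff ℝ 2 φ →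
        ∀ x ∉ closure Ω, IsLocalMax (fun z => u z - φ z) x →
          ⟪gradient φ x, γ x⟫ ≤ g x) →
      ∀ y ∉ closure Ω, ∀ t : ℝ, 0 < t → t ≤ τ y →
        u y ≤ (∫ s in (0:ℝ)..t, g (X y s)) + u (X y t)) ∧
    -- (b) supersolution inequality
    (∀ v : EN N → ℝ,
      (∀ x : EN N, ∃ C : ℝ, ∀ᶠ y in 𝓝 x, |v y| ≤ C) →
      LowerSemicontinuous v →
      (∀ φ : EN N → ℝ, ContDiff ℝ 2 φ →
        ∀ x ∉ closure Ω, IsLocalMin (fun z => v z - φ z) x →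
          g x ≤ ⟪gradient φ x, γ x⟫) →
      ∀ y ∉ closure Ω, ∀ t : ℝ, 0 < t → t ≤ τ y →
        (∫ s in (0:ℝ)..t, g (X y s)) + v (X y t) ≤ v y) :=
  transport_onesided_Lipschitz_general Ω γ g hgcont Cg hgbd K hOSL X τ hX0 hXstay hXode hXcont
end
end

section
/- Let Ω ⊂ ℝ^N be a nonempty open convex set, d̄(x) := dist(x, Ω̄). For every x ∈ ∂Ω, the set of outward unit normals N_Ω(x) := {n ∈ ℝ^N : |n| = 1 and n·(x − y) ≥ 0 for all y ∈ Ω̄} coincides with the set of limits of gradients of the distance function from outside: N_Ω(x) = {n ∈ ℝ^N : there exists a sequence x_k → x with x_k ∉ Ω̄ and ∇d̄(x_k) → n}. -/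
/-!
Outside a closed convex set `K`, write a point as `z = p + t • n` with `p ∈ K` its nearest point,
`t > 0` and `n` a unit outward normal at `p`. Then `infDist · K` is squeezed between the affine
function `w ↦ ⟪n, w - p⟫` and the smooth function `w ↦ ‖w - p‖`, which touch at `z`, so its
gradient at `z` is `n`. Hence every unit normal `n` at `x` is the constant gradient along the ray
`x + t • n`, and conversely along a sequence `z_k → x` the nearest points `p_k` also tend to `x`
(as `t_k = infDist z_k K → 0`), so a limit of the gradients `n_k` is a unit normal at `x` because
the set of pairs `(p, n)` with `n` a unit normal at `p` is closed.
-/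

open MeasureTheory Filter Set Metric
open scoped Topology RealInnerProductSpace

noncomputable section

/-- The distance to `closure Ω`. -/
def dbar {N : ℕ} (Ω : Set (EN N)) (x : EN N) : ℝ := Metric.infDist x (closure Ω)

theorem HasFDerivAt.of_eventually_le_of_le {E : Type*} [NormedAddCommGroup E] [NormedSpace ℝ E]
    {f ℓ u : E → ℝ} {L : StrongDual ℝ E} {z : E} (hℓ : HasFDerivAt ℓ L z)
    (hu : DifferentiableAt ℝ u z) (hℓf : ∀ᶠ w in 𝓝 z, ℓ w ≤ f w) (hfu : ∀ᶠ w in 𝓝 z, f w ≤ u w)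
    (hz : ℓ z = u z) : HasFDerivAt f L z := by
  have hfz : f z = ℓ z := le_antisymm (hz ▸ hfu.self_of_nhds) hℓf.self_of_nhds
  -- `u - ℓ` is minimal at `z`, so `u` has the same derivative as `ℓ` there.
  have hmin : IsLocalMin (u - ℓ) z := by
    filter_upwards [hℓf, hfu] with w h₁ h₂
    simp only [Pi.sub_apply, hz, sub_self]
    linarith
  have hu' : HasFDerivAt u L z := by
    have := hmin.hasFDerivAt_eq_zero (hu.hasFDerivAt.sub hℓ)
    rw [← sub_eq_zero.mp this]
    exact hu.hasFDerivAt
  refine .of_isLittleO <| (Asymptotics.IsBigO.of_bound' ?_).trans_isLittleO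
    (hℓ.isLittleO.norm_left.add hu'.isLittleO.norm_left)
  filter_upwards [hℓf, hfu] with w h₁ h₂
  simp only [Real.norm_eq_abs, hfz, ← hz]
  refine (abs_le.mpr ⟨?_, ?_⟩).trans (le_abs_self _) <;>
    linarith [neg_abs_le (ℓ w - ℓ z - L (w - z)), abs_nonneg (ℓ w - ℓ z - L (w - z)),
      le_abs_self (u w - ℓ z - L (w - z)), abs_nonneg (u w - ℓ z - L (w - z))]

section UnitNormal

variable {F : Type*} [NormedAddCommGroup F] [InnerProductSpace ℝ F]

def IsUnitNormal (K : Set F) (p n : F) : Prop :=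
  ‖n‖ = 1 ∧ ∀ y ∈ K, 0 ≤ ⟪n, p - y⟫

theorem isClosed_setOf_isUnitNormal (K : Set F) :
    IsClosed {q : F × F | IsUnitNormal K q.1 q.2} := by
  simp only [IsUnitNormal, ofPred_and, ofPred_forall]
  refine (isClosed_eq (by fun_prop) (by fun_prop)).inter
    (isClosed_biInter fun y _ => isClosed_le (by fun_prop) (by fun_prop))

variable {K : Set F} {p n : F} {t : ℝ}

theorem IsUnitNormal.add_smul_notMem (hn : IsUnitNormal K p n) (ht : 0 < t) :
    p + t • n ∉ K := by
  intro hK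
  have := hn.2 _ hK
  rw [sub_add_cancel_left, inner_neg_right, real_inner_smul_right,
    real_inner_self_eq_norm_sq, hn.1] at this
  linarith

theorem IsUnitNormal.inner_sub_le_infDist (hp : p ∈ K) (hn : IsUnitNormal K p n) (w : F) :
    ⟪n, w - p⟫ ≤ infDist w K := by
  refine (le_infDist ⟨p, hp⟩).2 fun y hy => ?_
  calc ⟪n, w - p⟫ = ⟪n, w - y⟫ - ⟪n, p - y⟫ := by
        rw [← inner_sub_right, sub_sub_sub_cancel_right]
    _ ≤ ‖n‖ * ‖w - y‖ - 0 := sub_le_sub (real_inner_le_norm _ _) (hn.2 y hy)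
    _ = dist w y := by rw [hn.1, one_mul, sub_zero, dist_eq_norm]

theorem IsUnitNormal.infDist_add_smul (hp : p ∈ K) (hn : IsUnitNormal K p n) (ht : 0 ≤ t) :
    infDist (p + t • n) K = t := by
  refine le_antisymm ?_ ?_
  · calc infDist (p + t • n) K ≤ dist (p + t • n) p := infDist_le_dist_of_mem hp
      _ = t := by rw [dist_eq_norm, add_sub_cancel_left, norm_smul, hn.1, mul_one,
        Real.norm_of_nonneg ht]
  · calc t = ⟪n, p + t • n - p⟫ := by
          rw [add_sub_cancel_left, real_inner_smul_right, real_inner_self_eq_norm_sq, hn.1]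
          ring
      _ ≤ infDist (p + t • n) K := hn.inner_sub_le_infDist hp _

theorem IsUnitNormal.hasGradientAt_infDist_add_smul [CompleteSpace F] (hp : p ∈ K)
    (hn : IsUnitNormal K p n) (ht : 0 < t) :
    HasGradientAt (fun w => infDist w K) n (p + t • n) := by
  have hn0 : n ≠ 0 := norm_ne_zero_iff.mp (hn.1 ▸ one_ne_zero)
  rw [hasGradientAt_iff_hasFDerivAt]
  refine ((InnerProductSpace.toDual ℝ F n).hasFDerivAt.sub_const (⟪n, p⟫)).of_eventually_le_of_le
    (u := fun w => ‖w - p‖) ?_ (.of_forall fun w => ?_) (.of_forall fun w => ?_) ?_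
  · exact (differentiableAt_id.sub_const p).norm ℝ (by simp [ht.ne', hn0])
  · simpa [← inner_sub_right] using hn.inner_sub_le_infDist hp w
  · simpa [dist_eq_norm] using infDist_le_dist_of_mem (x := w) hp
  · simp only [InnerProductSpace.toDual_apply_apply, ← inner_sub_right, add_sub_cancel_left,
      real_inner_smul_right, real_inner_self_eq_norm_sq, norm_smul, hn.1, Real.norm_of_nonneg ht.le]
    ring

theorem exists_isUnitNormal_add_smul_eq (hK : IsComplete K) (hKc : Convex ℝ K)
    (hne : K.Nonempty) {z : F} (hz : z ∉ K) :
    ∃ p ∈ K, ∃ n, IsUnitNormal K p n ∧ ∃ t : ℝ, 0 < t ∧ p + t • n = z := by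
  obtain ⟨p, hp, hmin⟩ := exists_norm_eq_iInf_of_complete_convex hne hK hKc z
  have hvar := (norm_eq_iInf_iff_real_inner_le_zero hKc hp).1 hmin
  have hd : 0 < ‖z - p‖ := norm_pos_iff.2 (sub_ne_zero.2 fun h => hz (h ▸ hp))
  refine ⟨p, hp, ‖z - p‖⁻¹ • (z - p), ⟨?_, fun y hy => ?_⟩, ‖z - p‖, hd, ?_⟩
  · rw [norm_smul, norm_inv, norm_norm, inv_mul_cancel₀ hd.ne']
  · rw [real_inner_smul_left, ← neg_sub y p, inner_neg_right]
    exact mul_nonneg (inv_nonneg.2 hd.le) (neg_nonneg.2 (hvar y hy))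
  · rw [smul_smul, mul_inv_cancel₀ hd.ne', one_smul, add_sub_cancel]

end UnitNormal

theorem normal_cone_eq_gradient_limits_general
    {N : ℕ}
    (Ω : Set (EN N)) (hΩconv : Convex ℝ Ω)
    (x : EN N) (hx : x ∈ frontier Ω) :
    {n : EN N | ‖n‖ = 1 ∧ ∀ y ∈ closure Ω, 0 ≤ ⟪n, x - y⟫} =
    {n : EN N | ∃ xk : ℕ → EN N, (∀ k, xk k ∉ closure Ω) ∧
      Tendsto xk atTop (𝓝 x) ∧
      Tendsto (fun k => gradient (dbar Ω) (xk k)) atTop (𝓝 n)} := by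
  have hxK : x ∈ closure Ω := frontier_subset_closure hx
  ext n
  constructor
  · intro (hn : IsUnitNormal (closure Ω) x n)
    have htk (k : ℕ) : (0 : ℝ) < 1 / ((k : ℝ) + 1) := by positivity
    refine ⟨fun k => x + (1 / ((k : ℝ) + 1)) • n, fun k => hn.add_smul_notMem (htk k), ?_, ?_⟩
    · simpa using tendsto_const_nhds.add
        ((tendsto_one_div_add_atTop_nhds_zero_nat (𝕜 := ℝ)).smul_const n)
    · exact tendsto_const_nhds.congr fun k =>
        (hn.hasGradientAt_infDist_add_smul hxK (htk k)).gradient.symm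
  · rintro ⟨xk, hxk, hlim, hgrad⟩
    choose p hp nk hnk t ht hpt using fun k => exists_isUnitNormal_add_smul_eq
      isClosed_closure.isComplete hΩconv.closure ⟨x, hxK⟩ (hxk k)
    have hnk_lim : Tendsto nk atTop (𝓝 n) := hgrad.congr fun k => by
      rw [← hpt k]; exact ((hnk k).hasGradientAt_infDist_add_smul (hp k) (ht k)).gradient
    have ht_lim : Tendsto t atTop (𝓝 0) := by
      have := ((continuous_infDist_pt (closure Ω)).tendsto x).comp hlim
      rw [infDist_zero_of_mem hxK] at this
      exact this.congr fun k => by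
        simp only [Function.comp_apply, ← hpt k, (hnk k).infDist_add_smul (hp k) (ht k).le]
    have hp_lim : Tendsto p atTop (𝓝 x) := by
      simpa [← hpt] using hlim.sub (ht_lim.smul hnk_lim)
    exact (isClosed_setOf_isUnitNormal _).mem_of_tendsto (hp_lim.prodMk_nhds hnk_lim)
      (.of_forall hnk)

/-- Let `Ω ⊆ ℝ^N` be a nonempty open convex set.  For every boundary
point `x ∈ ∂Ω`, the set of outward unit normals
`N_Ω(x) = {n : |n| = 1, n·(x − y) ≥ 0 ∀ y ∈ Ω̄}` coincides with the set of limits of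
gradients of the distance function `d̄ = dist(·, Ω̄)` taken from outside `Ω̄`. -/
theorem normal_cone_eq_gradient_limits
    {N : ℕ} (hN : 1 ≤ N)
    (Ω : Set (EN N)) (hΩne : Ω.Nonempty) (hΩopen : IsOpen Ω) (hΩconv : Convex ℝ Ω)
    (x : EN N) (hx : x ∈ frontier Ω) :
    {n : EN N | ‖n‖ = 1 ∧ ∀ y ∈ closure Ω, 0 ≤ ⟪n, x - y⟫} =
    {n : EN N | ∃ xk : ℕ → EN N, (∀ k, xk k ∉ closure Ω) ∧
      Tendsto xk atTop (𝓝 x) ∧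
      Tendsto (fun k => gradient (dbar Ω) (xk k)) atTop (𝓝 n)} :=
  normal_cone_eq_gradient_limits_general Ω hΩconv x hx
end
end

section
/- Let Ω ⊂ ℝ^N be a nonempty open convex set, d̄ := dist(·, Ω̄), and d̃ := min(d̄, 1). Define the vector field V : ℝ^N → ℝ^N by V(x) := d̃(x)·∇d̄(x) for x ∉ Ω̄ and V(x) := 0 for x ∈ Ω̄. Then V is continuous on ℝ^N and satisfies the one-sided Lipschitz condition: there is a constant K ≥ 0 such that (V(x) − V(y))·(x − y) ≥ −K|x − y|² for all x, y ∈ ℝ^N. -/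
open MeasureTheory Filter Set Metric
open scoped Topology RealInnerProductSpace

noncomputable section

/-- The truncated distance `d̃ = min(d̄, 1)`. -/
def dtil {N : ℕ} (Ω : Set (EN N)) (x : EN N) : ℝ := min (dbar Ω x) 1

/-- The penalization vector field `V(x) = d̃(x) ∇d̄(x)` for `x ∉ closure Ω`, extended by
`0` on `closure Ω`. -/
def Vfield {N : ℕ} (Ω : Set (EN N)) : EN N → EN N :=
  ((closure Ω)ᶜ).indicator fun x => dtil Ω x • gradient (dbar Ω) x

/-!
Let `P` be the metric projection onto the closed convex set `C = Ω̄` and `d̄ = dist(·, C)`.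
At `x ∉ C`, with `u = (x - P x) / d̄ x`, the function `d̄` lies above its supporting affine function
`d̄ x + ⟪u, · - x⟫` and below the cone `‖· - P x‖`, and all three agree at `x`; so `∇d̄ x = u`,
which is continuous off `C` because `P` is 1-Lipschitz, and is a subgradient of `d̄`.
Since `V = φ (d̄) ∇d̄` with `φ = min (·, 1)` nonnegative and nondecreasing, adding the subgradient
inequalities at `x` and `y` gives
`⟪V x - V y, x - y⟫ ≥ (φ (d̄ x) - φ (d̄ y)) (d̄ x - d̄ y) ≥ 0`, so `K = 0` works.
Continuity on `C` follows from `‖∇d̄‖ ≤ 1` and `d̃ = 0` there.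
-/

section InnerProductSpace

variable {E : Type*} [NormedAddCommGroup E] [InnerProductSpace ℝ E]

theorem real_inner_sub_sub_nonneg_of_monotone {f : E → ℝ} {φ : ℝ → ℝ} {F : E → E}
    (hφ : Monotone φ) (hF : ∀ x z, φ (f x) * (f x - f z) ≤ ⟪F x, x - z⟫) (x y : E) :
    0 ≤ ⟪F x - F y, x - y⟫ := by
  have hxy := hF x y
  have hyx := hF y x
  have hmono : 0 ≤ (φ (f x) - φ (f y)) * (f x - f y) := by
    rcases le_total (f x) (f y) with h | h
    · exact mul_nonneg_of_nonpos_of_nonpos (sub_nonpos.2 (hφ h)) (sub_nonpos.2 h)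
    · exact mul_nonneg (sub_nonneg.2 (hφ h)) (sub_nonneg.2 h)
  have hswap : ⟪F y, x - y⟫ = -⟪F y, y - x⟫ := by rw [← inner_neg_right, neg_sub]
  rw [inner_sub_left, hswap]
  nlinarith

/-- For convex `C` this variational inequality characterizes `P x` as the point of `C` nearest
to `x`. -/
def IsMetricProjection (C : Set E) (P : E → E) : Prop :=
  ∀ x, P x ∈ C ∧ ∀ w ∈ C, ⟪x - P x, w - P x⟫ ≤ 0

namespace IsMetricProjection

variable {C : Set E} {P : E → E}

theorem norm_sub_eq_infDist (hconv : Convex ℝ C) (hP : IsMetricProjection C P) (x : E) :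
    ‖x - P x‖ = infDist x C := by
  rw [(norm_eq_iInf_iff_real_inner_le_zero hconv (hP x).1).2 (hP x).2, infDist_eq_iInf]
  simp only [dist_eq_norm]

theorem lipschitzWith_one (hP : IsMetricProjection C P) : LipschitzWith 1 P := by
  refine LipschitzWith.of_dist_le_mul fun x y => ?_
  rw [NNReal.coe_one, one_mul, dist_eq_norm, dist_eq_norm]
  have hx := (hP x).2 (P y) (hP y).1
  have hy := (hP y).2 (P x) (hP x).1
  have hsplit : ⟪x - y, P x - P y⟫ =
      ‖P x - P y‖ ^ 2 - ⟪x - P x, P y - P x⟫ - ⟪y - P y, P x - P y⟫ := by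
    rw [← real_inner_self_eq_norm_sq]
    simp only [inner_sub_left, inner_sub_right, real_inner_comm]
    ring
  nlinarith [real_inner_le_norm (x - y) (P x - P y), norm_nonneg (P x - P y),
    norm_nonneg (x - y)]

theorem inner_le_mul_infDist_sub (hconv : Convex ℝ C) (hP : IsMetricProjection C P) (x z : E) :
    ⟪x - P x, z - x⟫ ≤ infDist x C * (infDist z C - infDist x C) := by
  have hsplit : ⟪x - P x, z - x⟫ =
      ⟪x - P x, z - P z⟫ + ⟪x - P x, P z - P x⟫ - ‖x - P x‖ ^ 2 := by
    rw [← real_inner_self_eq_norm_sq]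
    simp only [inner_sub_left, inner_sub_right, real_inner_comm]
    ring
  have hcs := real_inner_le_norm (x - P x) (z - P z)
  have hPz := (hP x).2 (P z) (hP z).1
  rw [hP.norm_sub_eq_infDist hconv, hP.norm_sub_eq_infDist hconv] at hcs
  rw [hsplit, hP.norm_sub_eq_infDist hconv]
  nlinarith

theorem infDist_add_inner_le (hconv : Convex ℝ C) (hP : IsMetricProjection C P) {x : E}
    (hx : x ∉ C) (z : E) :
    infDist x C + ⟪(infDist x C)⁻¹ • (x - P x), z - x⟫ ≤ infDist z C := by
  have hd : 0 < infDist x C := by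
    rw [← hP.norm_sub_eq_infDist hconv, norm_pos_iff, sub_ne_zero]
    exact fun h => hx (h ▸ (hP x).1)
  have h : (infDist x C)⁻¹ * ⟪x - P x, z - x⟫ ≤ infDist z C - infDist x C :=
    (inv_mul_le_iff₀ hd).2 (hP.inner_le_mul_infDist_sub hconv x z)
  rw [real_inner_smul_left]
  linarith

end IsMetricProjection

variable [CompleteSpace E]

theorem exists_isMetricProjection {C : Set E} (hne : C.Nonempty) (hcl : IsClosed C)
    (hconv : Convex ℝ C) : ∃ P, IsMetricProjection C P := by
  choose P hPC hP using exists_norm_eq_iInf_of_complete_convex hne hcl.isComplete hconv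
  exact ⟨P, fun x => ⟨hPC x, (norm_eq_iInf_iff_real_inner_le_zero hconv (hPC x)).1 (hP x)⟩⟩

theorem hasGradientAt_norm_sub {p x : E} (hx : x ≠ p) :
    HasGradientAt (fun y => ‖y - p‖) (‖x - p‖⁻¹ • (x - p)) x := by
  have hne : ‖x - p‖ ^ 2 ≠ 0 := by simpa [sub_eq_zero] using hx
  have h := (((hasFDerivAt_id x).sub_const p).norm_sq).sqrt hne
  simp only [Real.sqrt_sq (norm_nonneg _)] at h
  rw [hasGradientAt_iff_hasFDerivAt]
  refine h.congr_fderiv (ContinuousLinearMap.ext fun v => ?_)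
  simp only [one_div, id_eq, ContinuousLinearMap.comp_id, smul_apply,
    innerSL_apply_apply, InnerProductSpace.toDual_apply_apply, real_inner_smul_left, nsmul_eq_mul,
    smul_eq_mul]
  ring

theorem HasGradientAt.of_le_of_inner_le {f g : E → ℝ} {v x : E} (hg : HasGradientAt g v x)
    (hfg : ∀ y, f y ≤ g y) (hfx : f x = g x) (hsub : ∀ y, f x + ⟪v, y - x⟫ ≤ f y) :
    HasGradientAt f v x := by
  rw [hasGradientAt_iff_isLittleO] at hg ⊢
  refine (Asymptotics.isBigO_of_le _ fun y => ?_).trans_isLittleO hg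
  have hlow := hsub y
  have hup := hfg y
  rw [Real.norm_of_nonneg (by linarith), Real.norm_of_nonneg (by linarith)]
  linarith

theorem LipschitzWith.norm_gradient_le {f : E → ℝ} {K : NNReal} (hf : LipschitzWith K f)
    (x : E) : ‖gradient f x‖ ≤ K := by
  rw [gradient, LinearIsometryEquiv.norm_map]
  exact norm_fderiv_le_of_lipschitz ℝ hf

theorem IsMetricProjection.hasGradientAt_infDist {C : Set E} {P : E → E} (hconv : Convex ℝ C)
    (hP : IsMetricProjection C P) {x : E} (hx : x ∉ C) :
    HasGradientAt (infDist · C) ((infDist x C)⁻¹ • (x - P x)) x := by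
  have hxP : x ≠ P x := fun h => hx (h ▸ (hP x).1)
  have hnorm := hP.norm_sub_eq_infDist hconv x
  have hcone := hasGradientAt_norm_sub hxP
  rw [hnorm] at hcone
  refine hcone.of_le_of_inner_le (fun y => ?_) hnorm.symm (hP.infDist_add_inner_le hconv hx)
  simpa only [dist_eq_norm] using infDist_le_dist_of_mem (x := y) (hP x).1

theorem norm_gradient_infDist_le (C : Set E) (x : E) : ‖gradient (infDist · C) x‖ ≤ 1 := by
  simpa using (lipschitz_infDist_pt C).norm_gradient_le x

variable {C : Set E}

theorem infDist_add_inner_gradient_infDist_le (hne : C.Nonempty) (hcl : IsClosed C)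
    (hconv : Convex ℝ C) {x : E} (hx : x ∉ C) (z : E) :
    infDist x C + ⟪gradient (infDist · C) x, z - x⟫ ≤ infDist z C := by
  obtain ⟨P, hP⟩ := exists_isMetricProjection hne hcl hconv
  rw [(hP.hasGradientAt_infDist hconv hx).gradient]
  exact hP.infDist_add_inner_le hconv hx z

theorem continuousOn_gradient_infDist (hne : C.Nonempty) (hcl : IsClosed C)
    (hconv : Convex ℝ C) : ContinuousOn (gradient (infDist · C)) Cᶜ := by
  obtain ⟨P, hP⟩ := exists_isMetricProjection hne hcl hconv
  have hformula : EqOn (fun x => (infDist x C)⁻¹ • (x - P x)) (gradient (infDist · C)) Cᶜ :=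
    fun x hx => ((hP.hasGradientAt_infDist hconv hx).gradient).symm
  refine ContinuousOn.congr ?_ hformula.symm
  refine ((continuous_infDist_pt C).continuousOn.inv₀ fun x hx => ?_).smul
    (continuous_id.sub hP.lipschitzWith_one.continuous).continuousOn
  exact ((hcl.notMem_iff_infDist_pos hne).1 hx).ne'

end InnerProductSpace

theorem Continuous.smul_of_continuousOn_of_norm_le {X 𝕜 F : Type*} [TopologicalSpace X]
    [NormedField 𝕜] [NormedAddCommGroup F] [NormedSpace 𝕜 F] {ψ : X → 𝕜} {g : X → F} {M : ℝ}
    (hψ : Continuous ψ) (hgM : ∀ x, ‖g x‖ ≤ M) (hg : ContinuousOn g {x | ψ x ≠ 0}) :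
    Continuous fun x => ψ x • g x := by
  refine continuous_iff_continuousAt.2 fun x => ?_
  by_cases hx : ψ x = 0
  · have hψx : Tendsto ψ (𝓝 x) (𝓝 0) := hx ▸ hψ.tendsto x
    simpa [ContinuousAt, hx] using
      hψx.zero_smul_isBoundedUnder_le ⟨M, eventually_map.2 (Eventually.of_forall hgM)⟩
  · exact hψ.continuousAt.smul
      (hg.continuousAt ((isOpen_ne_fun hψ continuous_const).mem_nhds hx))

section PenalizationField

variable {N : ℕ} {Ω : Set (EN N)}

theorem Vfield_eq_smul_gradient :
    Vfield Ω = fun x => dtil Ω x • gradient (dbar Ω) x := by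
  funext x
  by_cases hx : x ∈ closure Ω
  · simp [Vfield, dtil, dbar, hx, infDist_zero_of_mem hx]
  · simp [Vfield, hx]

theorem continuous_Vfield (hne : Ω.Nonempty) (hconv : Convex ℝ Ω) : Continuous (Vfield Ω) := by
  rw [Vfield_eq_smul_gradient]
  refine ((continuous_infDist_pt _).min continuous_const).smul_of_continuousOn_of_norm_le
    (norm_gradient_infDist_le _) ((continuousOn_gradient_infDist hne.closure isClosed_closure
      hconv.closure).mono fun x hx hmem => hx ?_)
  simp [infDist_zero_of_mem hmem]

theorem dtil_mul_sub_le_inner_Vfield (hne : Ω.Nonempty) (hconv : Convex ℝ Ω) (x z : EN N) :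
    dtil Ω x * (dbar Ω x - dbar Ω z) ≤ ⟪Vfield Ω x, x - z⟫ := by
  rw [Vfield_eq_smul_gradient, real_inner_smul_left]
  by_cases hx : x ∈ closure Ω
  · simp [dtil, dbar, infDist_zero_of_mem hx]
  · have hsub : dbar Ω x + ⟪gradient (dbar Ω) x, z - x⟫ ≤ dbar Ω z :=
      infDist_add_inner_gradient_infDist_le hne.closure isClosed_closure hconv.closure hx z
    have hswap : ⟪gradient (dbar Ω) x, x - z⟫ = -⟪gradient (dbar Ω) x, z - x⟫ := by
      rw [← inner_neg_right, neg_sub]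
    refine mul_le_mul_of_nonneg_left ?_ (le_min infDist_nonneg zero_le_one)
    linarith

end PenalizationField

theorem penalization_field_onesided_Lipschitz_general
    {N : ℕ}
    (Ω : Set (EN N)) (hΩne : Ω.Nonempty) (hΩconv : Convex ℝ Ω) :
    Continuous (Vfield Ω) ∧
    ∃ K : ℝ, 0 ≤ K ∧ ∀ x y : EN N,
      -(K * ‖x - y‖ ^ 2) ≤ ⟪Vfield Ω x - Vfield Ω y, x - y⟫ := by
  refine ⟨continuous_Vfield hΩne hΩconv, 0, le_rfl, fun x y => ?_⟩
  simpa using real_inner_sub_sub_nonneg_of_monotone (φ := fun t => min t 1)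
    (fun _ _ h => min_le_min_right 1 h) (dtil_mul_sub_le_inner_Vfield hΩne hΩconv) x y

/-- Let `Ω ⊆ ℝ^N` be a nonempty open convex set.  The vector field
`V(x) = d̃(x) ∇d̄(x)` (extended by `0` on `Ω̄`) is continuous on `ℝ^N` and satisfies the
one-sided Lipschitz condition `(V(x) − V(y))·(x − y) ≥ −K|x − y|²` for some `K ≥ 0`. -/
theorem penalization_field_onesided_Lipschitz
    {N : ℕ} (hN : 1 ≤ N)
    (Ω : Set (EN N)) (hΩne : Ω.Nonempty) (hΩopen : IsOpen Ω) (hΩconv : Convex ℝ Ω) :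
    Continuous (Vfield Ω) ∧
    ∃ K : ℝ, 0 ≤ K ∧ ∀ x y : EN N,
      -(K * ‖x - y‖ ^ 2) ≤ ⟪Vfield Ω x - Vfield Ω y, x - y⟫ :=
  penalization_field_onesided_Lipschitz_general Ω hΩne hΩconv
end
end
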